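/- In every model of ZFU_R: if duplication holds over a set of urelements A, then homogeneity holds over A. -/
import Mathlib


set_option linter.unusedVariables false
namespace Urelements

/-- First-order formulas of the language of urelement set theory, with a binary
relation `∈` (`mem`), equality, and a unary predicate `𝒜` (`ur`), using de Bruijn
variables `Fin n`. -/
inductive Fml : ℕ → Type
  | mem {n : ℕ} : Fin n → Fin n → Fml n
  | eq  {n : ℕ} : Fin n → Fin n → Fml n
  | ur  {n : ℕ} : Fin n → Fml n
  | not {n : ℕ} : Fml n → Fml n
  | and {n : ℕ} : Fml n → Fml n → Fml n
  | ex  {n : ℕ} : Fml (n + 1) → Fml n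

/-- Tarskian satisfaction of a formula in the structure `(M, E, A)`. -/
def Realize {M : Type} (E : M → M → Prop) (A : M → Prop) :
    ∀ {n : ℕ}, Fml n → (Fin n → M) → Prop
  | _, .mem i j, v => E (v i) (v j)
  | _, .eq i j, v => v i = v j
  | _, .ur i, v => A (v i)
  | _, .not φ, v => ¬ Realize E A φ v
  | _, .and φ ψ, v => Realize E A φ v ∧ Realize E A ψ v
  | _, .ex φ, v => ∃ x, Realize E A φ (Fin.snoc v x)

/-- Satisfaction of `φ` relativized to the members of `t`:
all quantifiers range over `{x | E x t}`. -/
def RealizeIn {M : Type} (E : M → M → Prop) (A : M → Prop) (t : M) :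
    ∀ {n : ℕ}, Fml n → (Fin n → M) → Prop
  | _, .mem i j, v => E (v i) (v j)
  | _, .eq i j, v => v i = v j
  | _, .ur i, v => A (v i)
  | _, .not φ, v => ¬ RealizeIn E A t φ v
  | _, .and φ ψ, v => RealizeIn E A t φ v ∧ RealizeIn E A t ψ v
  | _, .ex φ, v => ∃ x, E x t ∧ RealizeIn E A t φ (Fin.snoc v x)

/- ### The axioms of urelement set theory -/

/-- Axiom 𝒜: urelements have no members. -/
def AxiomA {M : Type} (E : M → M → Prop) (A : M → Prop) : Prop :=
  ∀ x, A x → ∀ y, ¬ E y x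

/-- Extensionality for sets. -/
def Extensionality {M : Type} (E : M → M → Prop) (A : M → Prop) : Prop :=
  ∀ x y, ¬ A x → ¬ A y → (∀ z, E z x ↔ E z y) → x = y

def Foundation {M : Type} (E : M → M → Prop) (A : M → Prop) : Prop :=
  ∀ x, (∃ y, E y x) → ∃ z, E z x ∧ ∀ w, E w z → ¬ E w x

def Pairing {M : Type} (E : M → M → Prop) (A : M → Prop) : Prop :=
  ∀ x y, ∃ z, ∀ v, E v z ↔ (v = x ∨ v = y)

def UnionAx {M : Type} (E : M → M → Prop) (A : M → Prop) : Prop :=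
  ∀ x, ∃ y, ∀ z, E z y ↔ ∃ w, E w x ∧ E z w

def PowersetAx {M : Type} (E : M → M → Prop) (A : M → Prop) : Prop :=
  ∀ x, ∃ y, ∀ z, E z y ↔ (¬ A z ∧ ∀ w, E w z → E w x)

def InfinityAx {M : Type} (E : M → M → Prop) (A : M → Prop) : Prop :=
  ∃ s, (∃ y, E y s ∧ ¬ A y ∧ ∀ z, ¬ E z y) ∧
    ∀ x, E x s → ∃ u, E u s ∧ ∀ v, E v u ↔ (E v x ∨ v = x)

/-- The Separation scheme: for every first-order formula `φ(z, u₁, …, uₙ)`. -/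
def SeparationScheme {M : Type} (E : M → M → Prop) (A : M → Prop) : Prop :=
  ∀ (n : ℕ) (φ : Fml (n + 1)) (p : Fin n → M) (x : M),
    ∃ y, ∀ z, E z y ↔ (E z x ∧ Realize E A φ (Fin.snoc p z))

/-- The Replacement scheme. -/
def ReplacementScheme {M : Type} (E : M → M → Prop) (A : M → Prop) : Prop :=
  ∀ (n : ℕ) (φ : Fml (n + 2)) (p : Fin n → M) (w : M),
    (∀ x, E x w → ∃! y, Realize E A φ (Fin.snoc (Fin.snoc p x) y)) →
    ∃ v, ∀ x, E x w → ∃ y, E y v ∧ Realize E A φ (Fin.snoc (Fin.snoc p x) y)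

/-- The Collection scheme. -/
def CollectionScheme {M : Type} (E : M → M → Prop) (A : M → Prop) : Prop :=
  ∀ (n : ℕ) (φ : Fml (n + 2)) (p : Fin n → M) (w : M),
    (∀ x, E x w → ∃ y, Realize E A φ (Fin.snoc (Fin.snoc p x) y)) →
    ∃ v, ∀ x, E x w → ∃ y, E y v ∧ Realize E A φ (Fin.snoc (Fin.snoc p x) y)

/-- The theory ZU. -/
def ZU {M : Type} (E : M → M → Prop) (A : M → Prop) : Prop :=
  AxiomA E A ∧ Extensionality E A ∧ Foundation E A ∧ Pairing E A ∧ UnionAx E A ∧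
    PowersetAx E A ∧ InfinityAx E A ∧ SeparationScheme E A

/-- ZFU_R = ZU + Replacement. -/
def ZFUR {M : Type} (E : M → M → Prop) (A : M → Prop) : Prop :=
  ZU E A ∧ ReplacementScheme E A

/- ### Internal set-theoretic notions -/

/-- `t` is a transitive set. -/
def TransSet {M : Type} (E : M → M → Prop) (A : M → Prop) (t : M) : Prop :=
  ¬ A t ∧ ∀ y, E y t → ∀ z, E z y → E z t

/-- The reflection scheme RP: for every formula `φ` and every set `x` there is a
transitive set `t ⊇ x` reflecting `φ`. -/
def RPScheme {M : Type} (E : M → M → Prop) (A : M → Prop) : Prop :=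
  ∀ (n : ℕ) (φ : Fml n) (x : M),
    ∃ t, TransSet E A t ∧ (∀ z, E z x → E z t) ∧
      ∀ v : Fin n → M, (∀ i, E (v i) t) →
        (Realize E A φ v ↔ RealizeIn E A t φ v)

/-- The weak reflection scheme RP⁻. -/
def RPMinusScheme {M : Type} (E : M → M → Prop) (A : M → Prop) : Prop :=
  ∀ (n : ℕ) (φ : Fml n) (v : Fin n → M),
    Realize E A φ v →
      ∃ t, TransSet E A t ∧ (∀ i, E (v i) t) ∧ RealizeIn E A t φ v

/-- `b` is a set of urelements. -/
def IsSetOfUrelements {M : Type} (E : M → M → Prop) (A : M → Prop) (b : M) : Prop :=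
  ¬ A b ∧ ∀ x, E x b → A x

/-- `b` and `c` are disjoint. -/
def DisjointM {M : Type} (E : M → M → Prop) (A : M → Prop) (b c : M) : Prop :=
  ∀ z, E z b → ¬ E z c

/-- `p` is the Kuratowski ordered pair `⟨x, y⟩`. -/
def IsKPair {M : Type} (E : M → M → Prop) (A : M → Prop) (x y p : M) : Prop :=
  ¬ A p ∧ ∀ w, E w p ↔
    (¬ A w ∧ ((∀ v, E v w ↔ v = x) ∨ (∀ v, E v w ↔ (v = x ∨ v = y))))

/-- `y` is a value of the (set-)function `f` at `x`. -/
def FVal {M : Type} (E : M → M → Prop) (A : M → Prop) (f x y : M) : Prop :=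
  ∃ p, E p f ∧ IsKPair E A x y p

/-- `f` is a function with domain `d`. -/
def IsFuncOn {M : Type} (E : M → M → Prop) (A : M → Prop) (f d : M) : Prop :=
  ¬ A f ∧ (∀ p, E p f → ∃ x y, E x d ∧ IsKPair E A x y p) ∧
    (∀ x, E x d → ∃ y, FVal E A f x y) ∧
    (∀ x y y', FVal E A f x y → FVal E A f x y' → y = y')

/-- `f` is an injection from `b` into `c`. -/
def IsInjection {M : Type} (E : M → M → Prop) (A : M → Prop) (f b c : M) : Prop :=
  IsFuncOn E A f b ∧ (∀ x y, FVal E A f x y → E y c) ∧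
    (∀ x x' y, FVal E A f x y → FVal E A f x' y → x = x')

/-- `f` is a bijection from `b` onto `c`. -/
def IsBijection {M : Type} (E : M → M → Prop) (A : M → Prop) (f b c : M) : Prop :=
  IsInjection E A f b c ∧ ∀ y, E y c → ∃ x, E x b ∧ FVal E A f x y

/-- `b` and `c` are equinumerous (by an internal bijection). -/
def Equinumerous {M : Type} (E : M → M → Prop) (A : M → Prop) (b c : M) : Prop :=
  ∃ f, IsBijection E A f b c

/-- `u` is related to `v` by the set-relation `r` (a set of ordered pairs). -/
def RelOf {M : Type} (E : M → M → Prop) (A : M → Prop) (r u v : M) : Prop :=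
  ∃ p, E p r ∧ IsKPair E A u v p

/-- `r` is a well-ordering of `x`. -/
def IsWellOrderOn {M : Type} (E : M → M → Prop) (A : M → Prop) (r x : M) : Prop :=
  (∀ u v, RelOf E A r u v → (E u x ∧ E v x)) ∧
    (∀ u, E u x → ¬ RelOf E A r u u) ∧
    (∀ u v w, RelOf E A r u v → RelOf E A r v w → RelOf E A r u w) ∧
    (∀ u v, E u x → E v x → u ≠ v → (RelOf E A r u v ∨ RelOf E A r v u)) ∧
    (∀ s, ¬ A s → (∀ z, E z s → E z x) → (∃ z, E z s) →
      ∃ m, E m s ∧ ∀ z, E z s → ¬ RelOf E A r z m)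

def WellOrderable {M : Type} (E : M → M → Prop) (A : M → Prop) (x : M) : Prop :=
  ∃ r, ¬ A r ∧ IsWellOrderOn E A r x

/-- AC: every set is well-orderable. -/
def AxChoice {M : Type} (E : M → M → Prop) (A : M → Prop) : Prop :=
  ∀ x, ¬ A x → WellOrderable E A x

/-- ZFCU_R = ZFU_R + AC. -/
def ZFCUR {M : Type} (E : M → M → Prop) (A : M → Prop) : Prop :=
  ZFUR E A ∧ AxChoice E A

/-- AC_𝒜: every set of urelements is well-orderable. -/
def ACA {M : Type} (E : M → M → Prop) (A : M → Prop) : Prop :=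
  ∀ b, IsSetOfUrelements E A b → WellOrderable E A b

/-- `o` is a (von Neumann) ordinal: a transitive pure set well-ordered by `∈`. -/
def IsOrdinal {M : Type} (E : M → M → Prop) (A : M → Prop) (o : M) : Prop :=
  TransSet E A o ∧ (∀ x, E x o → TransSet E A x) ∧
    (∀ x y, E x o → E y o → (E x y ∨ x = y ∨ E y x))

/-- `k` is a cardinal: an ordinal not equinumerous with any of its members. -/
def IsCardinal {M : Type} (E : M → M → Prop) (A : M → Prop) (k : M) : Prop :=
  IsOrdinal E A k ∧ ∀ o, E o k → ¬ Equinumerous E A o k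

def IsLimitOrdinal {M : Type} (E : M → M → Prop) (A : M → Prop) (o : M) : Prop :=
  IsOrdinal E A o ∧ (∃ x, E x o) ∧ ∀ x, E x o → ∃ y, E y o ∧ E x y

/-- `k` is an infinite cardinal (a cardinal with a nonzero limit ordinal ≤ it). -/
def IsInfiniteCardinal {M : Type} (E : M → M → Prop) (A : M → Prop) (k : M) : Prop :=
  IsCardinal E A k ∧ ∃ b, (E b k ∨ b = k) ∧ IsLimitOrdinal E A b

/-- `o` is ω, the least nonzero limit ordinal. -/
def IsOmega {M : Type} (E : M → M → Prop) (A : M → Prop) (o : M) : Prop :=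
  IsLimitOrdinal E A o ∧ ∀ x, E x o → ¬ IsLimitOrdinal E A x

/-- The cardinal `k` is realized: some set of urelements is equinumerous with it. -/
def Realized {M : Type} (E : M → M → Prop) (A : M → Prop) (k : M) : Prop :=
  ∃ b, IsSetOfUrelements E A b ∧ Equinumerous E A b k

/-- Plenitude: every cardinal is realized. -/
def Plenitude {M : Type} (E : M → M → Prop) (A : M → Prop) : Prop :=
  ∀ k, IsCardinal E A k → Realized E A k

/-- Plenitude⁺: every set is equinumerous with some set of urelements. -/
def PlenitudePlus {M : Type} (E : M → M → Prop) (A : M → Prop) : Prop :=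
  ∀ x, ¬ A x → ∃ b, IsSetOfUrelements E A b ∧ Equinumerous E A x b

/-- `o` is the supremum (least upper bound in the ordinals) of the set `s`. -/
def IsSupremumOf {M : Type} (E : M → M → Prop) (A : M → Prop) (s o : M) : Prop :=
  IsOrdinal E A o ∧ (∀ k, E k s → (E k o ∨ k = o)) ∧
    ∀ o', IsOrdinal E A o' → (∀ k, E k s → (E k o' ∨ k = o')) → (E o o' ∨ o = o')

/-- Closure: the supremum of a set of realized cardinals is realized. -/
def ClosureAx {M : Type} (E : M → M → Prop) (A : M → Prop) : Prop :=
  ∀ s, ¬ A s → (∀ k, E k s → IsCardinal E A k ∧ Realized E A k) →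
    ∀ o, IsSupremumOf E A s o → Realized E A o

/-- `b` has a duplicate: a disjoint equinumerous set of urelements. -/
def HasDuplicate {M : Type} (E : M → M → Prop) (A : M → Prop) (b : M) : Prop :=
  ∃ c, IsSetOfUrelements E A c ∧ DisjointM E A b c ∧ Equinumerous E A b c

/-- Duplication: every set of urelements has a duplicate. -/
def Duplication {M : Type} (E : M → M → Prop) (A : M → Prop) : Prop :=
  ∀ b, IsSetOfUrelements E A b → HasDuplicate E A b

/-- Duplication holds over `a`: every set of urelements disjoint from `a` has a
duplicate disjoint from `a`. -/
def DuplicationOver {M : Type} (E : M → M → Prop) (A : M → Prop) (a : M) : Prop :=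
  ∀ b, IsSetOfUrelements E A b → DisjointM E A b a →
    ∃ c, IsSetOfUrelements E A c ∧ DisjointM E A c b ∧ DisjointM E A c a ∧
      Equinumerous E A b c

/-- `π` is an automorphism of the universe. -/
def IsAutomorphism {M : Type} (E : M → M → Prop) (A : M → Prop) (π : M ≃ M) : Prop :=
  (∀ x y, E (π x) (π y) ↔ E x y) ∧ (∀ x, A (π x) ↔ A x)

/-- Homogeneity holds over `a`. -/
def HomogeneityOver {M : Type} (E : M → M → Prop) (A : M → Prop) (a : M) : Prop :=
  ∀ b c, IsSetOfUrelements E A b → IsSetOfUrelements E A c → Equinumerous E A b c →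
    DisjointM E A b a → DisjointM E A c a →
    ∃ π : M ≃ M, IsAutomorphism E A π ∧ π b = c ∧ ∀ x, E x a → π x = x

/-- `t` is a tail of `a`. -/
def IsTailOf {M : Type} (E : M → M → Prop) (A : M → Prop) (t a : M) : Prop :=
  IsSetOfUrelements E A t ∧ DisjointM E A t a ∧
    ∀ c, IsSetOfUrelements E A c → DisjointM E A c a → ∃ f, IsInjection E A f c t

/-- Tail: every set of urelements has a tail. -/
def TailAx {M : Type} (E : M → M → Prop) (A : M → Prop) : Prop :=
  ∀ a, IsSetOfUrelements E A a → ∃ t, IsTailOf E A t a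

/-- Tail⁺: every set of urelements has a well-orderable tail. -/
def TailPlus {M : Type} (E : M → M → Prop) (A : M → Prop) : Prop :=
  ∀ a, IsSetOfUrelements E A a → ∃ t, IsTailOf E A t a ∧ WellOrderable E A t

/-- `s` is the restriction `f ↾ a`. -/
def IsRestrictionOf {M : Type} (E : M → M → Prop) (A : M → Prop) (f a s : M) : Prop :=
  ¬ A s ∧ ∀ p, E p s ↔ (E p f ∧ ∃ x y, IsKPair E A x y p ∧ E x a)

/-- The DC_κ-scheme at the cardinal `k` of the model. -/
def DCSchemeAt {M : Type} (E : M → M → Prop) (A : M → Prop) (k : M) : Prop :=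
  ∀ (n : ℕ) (φ : Fml (n + 2)) (p : Fin n → M),
    (∀ x, ∃ y, Realize E A φ (Fin.snoc (Fin.snoc p x) y)) →
    ∃ f, IsFuncOn E A f k ∧ ∀ a, E a k →
      ∃ s t, IsRestrictionOf E A f a s ∧ FVal E A f a t ∧
        Realize E A φ (Fin.snoc (Fin.snoc p s) t)

/-- The DC_ω-scheme. -/
def DComegaScheme {M : Type} (E : M → M → Prop) (A : M → Prop) : Prop :=
  ∀ o, IsOmega E A o → DCSchemeAt E A o

/-- DC_{<Ord}: the DC_κ-scheme for every infinite cardinal κ. -/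
def DCltOrd {M : Type} (E : M → M → Prop) (A : M → Prop) : Prop :=
  ∀ k, IsInfiniteCardinal E A k → DCSchemeAt E A k

/- ### Restriction to a subclass (for inner models) -/

def restrictE {M : Type} (E : M → M → Prop) (D : M → Prop) :
    {x : M // D x} → {x : M // D x} → Prop := fun a b => E a.1 b.1

def restrictA {M : Type} (A : M → Prop) (D : M → Prop) :
    {x : M // D x} → Prop := fun a => A a.1

/-- `t` is the transitive closure of `{x}` (the least transitive set with `x` as member). -/
def IsTransClosOfSing {M : Type} (E : M → M → Prop) (A : M → Prop) (x t : M) : Prop :=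
  TransSet E A t ∧ E x t ∧
    ∀ t', TransSet E A t' → E x t' → ∀ z, E z t → E z t'

/-- `kx` is the kernel of `x`: the set of urelements in the transitive closure of `{x}`. -/
def IsKernelOf {M : Type} (E : M → M → Prop) (A : M → Prop) (x kx : M) : Prop :=
  ¬ A kx ∧ ∃ t, IsTransClosOfSing E A x t ∧ ∀ a, E a kx ↔ (A a ∧ E a t)



/-! ### Part 1: expressibility framework and basic set lemmas -/

section Machinery

variable {M : Type}

/-- Renaming of variables in a formula. -/
def Fml.rename : ∀ {m n : ℕ}, (Fin m → Fin n) → Fml m → Fml n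
  | _, _, f, .mem i j => .mem (f i) (f j)
  | _, _, f, .eq i j => .eq (f i) (f j)
  | _, _, f, .ur i => .ur (f i)
  | _, _, f, .not φ => .not (φ.rename f)
  | _, _, f, .and φ ψ => .and (φ.rename f) (ψ.rename f)
  | _, _, f, .ex φ => .ex (φ.rename (Fin.snoc (Fin.castSucc ∘ f) (Fin.last _)))

variable {E : M → M → Prop} {A : M → Prop}

theorem realize_rename : ∀ {m n : ℕ} (f : Fin m → Fin n) (φ : Fml m) (v : Fin n → M),
    Realize E A (φ.rename f) v ↔ Realize E A φ (v ∘ f)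
  | _, _, f, .mem i j, v => .rfl
  | _, _, f, .eq i j, v => .rfl
  | _, _, f, .ur i, v => .rfl
  | _, _, f, .not φ, v => by simp [Realize, Fml.rename, realize_rename f φ v]
  | _, _, f, .and φ ψ, v => by
      simp [Realize, Fml.rename, realize_rename f φ v, realize_rename f ψ v]
  | _, _, f, .ex φ, v => by
      simp only [Realize, Fml.rename]
      refine exists_congr fun x => ?_
      rw [realize_rename]
      congr! 1
      funext i
      induction i using Fin.lastCases with
      | last => simp
      | cast j => simp

/-- `P` is an expressible (first-order definable) predicate. -/
def Expr (E : M → M → Prop) (A : M → Prop) {k : ℕ} (P : (Fin k → M) → Prop) : Prop :=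
  ∃ φ : Fml k, ∀ v, Realize E A φ v ↔ P v

theorem Expr.mem {k} (i j : Fin k) : Expr E A (fun v => E (v i) (v j)) := ⟨.mem i j, fun _ => .rfl⟩
theorem Expr.eq {k} (i j : Fin k) : Expr E A (fun v => v i = v j) := ⟨.eq i j, fun _ => .rfl⟩
theorem Expr.ur {k} (i : Fin k) : Expr E A (fun v => A (v i)) := ⟨.ur i, fun _ => .rfl⟩
theorem Expr.and {k} {P Q : (Fin k → M) → Prop} (h1 : Expr E A P) (h2 : Expr E A Q) :
    Expr E A (fun v => P v ∧ Q v) := by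
  obtain ⟨φ, hφ⟩ := h1; obtain ⟨ψ, hψ⟩ := h2
  exact ⟨.and φ ψ, fun v => by simp [Realize, hφ, hψ]⟩
theorem Expr.not {k} {P : (Fin k → M) → Prop} (h1 : Expr E A P) :
    Expr E A (fun v => ¬ P v) := by
  obtain ⟨φ, hφ⟩ := h1
  exact ⟨.not φ, fun v => by simp [Realize, hφ]⟩
theorem Expr.ex {k} {P : (Fin (k+1) → M) → Prop} (h1 : Expr E A P) :
    Expr E A (fun v => ∃ x, P (Fin.snoc v x)) := by
  obtain ⟨φ, hφ⟩ := h1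
  exact ⟨.ex φ, fun v => by simp [Realize, hφ]⟩
theorem Expr.congr {k} {P Q : (Fin k → M) → Prop} (h : Expr E A P) (h2 : ∀ v, P v ↔ Q v) :
    Expr E A Q := by
  obtain ⟨φ, hφ⟩ := h; exact ⟨φ, fun v => (hφ v).trans (h2 v)⟩
theorem Expr.or {k} {P Q : (Fin k → M) → Prop} (h1 : Expr E A P) (h2 : Expr E A Q) :
    Expr E A (fun v => P v ∨ Q v) :=
  (h1.not.and h2.not).not.congr fun v => by tauto
theorem Expr.imp {k} {P Q : (Fin k → M) → Prop} (h1 : Expr E A P) (h2 : Expr E A Q) :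
    Expr E A (fun v => P v → Q v) :=
  (h1.and h2.not).not.congr fun v => by tauto
theorem Expr.iff {k} {P Q : (Fin k → M) → Prop} (h1 : Expr E A P) (h2 : Expr E A Q) :
    Expr E A (fun v => P v ↔ Q v) :=
  ((h1.imp h2).and (h2.imp h1)).congr fun v => by tauto
theorem Expr.all {k} {P : (Fin (k+1) → M) → Prop} (h1 : Expr E A P) :
    Expr E A (fun v => ∀ x, P (Fin.snoc v x)) :=
  h1.not.ex.not.congr fun v => by push_neg; rfl
theorem Expr.comp {k m} {P : (Fin k → M) → Prop} (h : Expr E A P) (f : Fin k → Fin m) :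
    Expr E A (fun v => P (v ∘ f)) := by
  obtain ⟨φ, hφ⟩ := h
  exact ⟨φ.rename f, fun v => by rw [realize_rename, hφ]⟩

/-- Separation wrapper. -/
theorem sepP (hsep : SeparationScheme E A) {n} {P : (Fin (n+1) → M) → Prop}
    (hP : Expr E A P) (p : Fin n → M) (x : M) :
    ∃ y, ∀ z, E z y ↔ (E z x ∧ P (Fin.snoc p z)) := by
  obtain ⟨φ, hφ⟩ := hP
  obtain ⟨y, hy⟩ := hsep n φ p x
  exact ⟨y, fun z => (hy z).trans (and_congr_right fun _ => hφ _)⟩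

/-- Replacement wrapper. -/
theorem repP (hrep : ReplacementScheme E A) {n} {P : (Fin (n+2) → M) → Prop}
    (hP : Expr E A P) (p : Fin n → M) (w : M)
    (h : ∀ x, E x w → ∃! y, P (Fin.snoc (Fin.snoc p x) y)) :
    ∃ v, ∀ x, E x w → ∃ y, E y v ∧ P (Fin.snoc (Fin.snoc p x) y) := by
  obtain ⟨φ, hφ⟩ := hP
  obtain ⟨v, hv⟩ := hrep n φ p w (fun x hx => by
    obtain ⟨y, hy, hu⟩ := h x hx
    exact ⟨y, (hφ _).2 hy, fun y' hy' => hu y' ((hφ _).1 hy')⟩)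
  exact ⟨v, fun x hx => by
    obtain ⟨y, hyv, hy⟩ := hv x hx
    exact ⟨y, hyv, (hφ _).1 hy⟩⟩

end Machinery

/-! ### Part 1b: basic set-theoretic lemmas -/

section BasicSets

variable {M : Type} {E : M → M → Prop} {A : M → Prop}

theorem mem_not_ur (hA : AxiomA E A) {z x : M} (h : E z x) : ¬ A x :=
  fun hx => hA x hx z h

theorem exists_empty (hinf : InfinityAx E A) : ∃ e, ¬ A e ∧ ∀ z, ¬ E z e := by
  obtain ⟨s, ⟨y, _, hy, hz⟩, -⟩ := hinf
  exact ⟨y, hy, hz⟩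

/-- Upgrade an extensionally specified object to a genuine set. -/
theorem toSet (hA : AxiomA E A) (hinf : InfinityAx E A) {Q : M → Prop}
    (h : ∃ y, ∀ z, E z y ↔ Q z) : ∃ y, ¬ A y ∧ ∀ z, E z y ↔ Q z := by
  obtain ⟨y, hy⟩ := h
  by_cases hne : ∃ z, E z y
  · exact ⟨y, mem_not_ur hA hne.choose_spec, hy⟩
  · obtain ⟨e, he, hee⟩ := exists_empty hinf
    push_neg at hne
    exact ⟨e, he, fun z => ⟨fun hz => absurd hz (hee z),
      fun hz => absurd ((hy z).2 hz) (hne z)⟩⟩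

theorem sepSet (hA : AxiomA E A) (hinf : InfinityAx E A) (hsep : SeparationScheme E A)
    {n} {P : (Fin (n+1) → M) → Prop} (hP : Expr E A P) (p : Fin n → M) (x : M) :
    ∃ y, ¬ A y ∧ ∀ z, E z y ↔ (E z x ∧ P (Fin.snoc p z)) :=
  toSet hA hinf (sepP hsep hP p x)

theorem exists_upair (hA : AxiomA E A) (hpair : Pairing E A) (x y : M) :
    ∃ w, ¬ A w ∧ ∀ v, E v w ↔ (v = x ∨ v = y) := by
  obtain ⟨z, hz⟩ := hpair x y
  exact ⟨z, mem_not_ur hA ((hz x).2 (Or.inl rfl)), hz⟩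

theorem exists_sing (hA : AxiomA E A) (hpair : Pairing E A) (x : M) :
    ∃ w, ¬ A w ∧ ∀ v, E v w ↔ v = x := by
  obtain ⟨z, hz0, hz⟩ := exists_upair hA hpair x x
  exact ⟨z, hz0, fun v => (hz v).trans (by tauto)⟩

theorem exists_union (hA : AxiomA E A) (hinf : InfinityAx E A) (hun : UnionAx E A) (x : M) :
    ∃ y, ¬ A y ∧ ∀ z, E z y ↔ ∃ w, E w x ∧ E z w :=
  toSet hA hinf (hun x)

theorem exists_bunion (hA : AxiomA E A) (hinf : InfinityAx E A) (hpair : Pairing E A)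
    (hun : UnionAx E A) (x y : M) :
    ∃ w, ¬ A w ∧ ∀ z, E z w ↔ (E z x ∨ E z y) := by
  obtain ⟨u, hu0, hu⟩ := exists_upair hA hpair x y
  obtain ⟨w, hw0, hw⟩ := exists_union hA hinf hun u
  refine ⟨w, hw0, fun z => (hw z).trans ?_⟩
  constructor
  · rintro ⟨v, hvu, hzv⟩
    rcases (hu v).1 hvu with rfl | rfl
    · exact Or.inl hzv
    · exact Or.inr hzv
  · rintro (hz | hz)
    · exact ⟨x, (hu x).2 (Or.inl rfl), hz⟩
    · exact ⟨y, (hu y).2 (Or.inr rfl), hz⟩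

/-- `u` is the successor `m ∪ {m}` of `m`. -/
def SuccOf {M : Type} (E : M → M → Prop) (m u : M) : Prop :=
  ∀ w, E w u ↔ (E w m ∨ w = m)

theorem exists_succof (hA : AxiomA E A) (hinf : InfinityAx E A) (hpair : Pairing E A)
    (hun : UnionAx E A) (x : M) : ∃ u, ¬ A u ∧ SuccOf E x u := by
  obtain ⟨s, hs0, hs⟩ := exists_sing hA hpair x
  obtain ⟨w, hw0, hw⟩ := exists_bunion hA hinf hpair hun x s
  exact ⟨w, hw0, fun v => (hw v).trans (by rw [hs v])⟩

theorem exists_pow (hA : AxiomA E A) (hpow : PowersetAx E A) (hinf : InfinityAx E A) (x : M) :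
    ∃ y, ¬ A y ∧ ∀ z, E z y ↔ (¬ A z ∧ ∀ w, E w z → E w x) := by
  obtain ⟨y, hy⟩ := hpow x
  obtain ⟨e, he0, he⟩ := exists_empty hinf
  exact ⟨y, mem_not_ur hA ((hy e).2 ⟨he0, fun w hw => absurd hw (he w)⟩), hy⟩

theorem kpair_intro (hA : AxiomA E A) (hext : Extensionality E A) (hpair : Pairing E A)
    (x y : M) : ∃ p, IsKPair E A x y p := by
  obtain ⟨s, hs0, hs⟩ := exists_sing hA hpair x
  obtain ⟨t, ht0, ht⟩ := exists_upair hA hpair x y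
  obtain ⟨p, hp0, hp⟩ := exists_upair hA hpair s t
  refine ⟨p, hp0, fun w => (hp w).trans ?_⟩
  constructor
  · rintro (rfl | rfl)
    · exact ⟨hs0, Or.inl fun v => hs v⟩
    · exact ⟨ht0, Or.inr fun v => ht v⟩
  · rintro ⟨hw0, hw | hw⟩
    · exact Or.inl (hext w s hw0 hs0 fun v => (hw v).trans (hs v).symm)
    · exact Or.inr (hext w t hw0 ht0 fun v => (hw v).trans (ht v).symm)

theorem kpair_ext (hext : Extensionality E A) {x y p p' : M}
    (h : IsKPair E A x y p) (h' : IsKPair E A x y p') : p = p' :=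
  hext p p' h.1 h'.1 fun w => (h.2 w).trans (h'.2 w).symm

theorem kpair_inj (hA : AxiomA E A) (hext : Extensionality E A) (hpair : Pairing E A)
    {x y x' y' p : M} (h : IsKPair E A x y p) (h' : IsKPair E A x' y' p) :
    x = x' ∧ y = y' := by
  obtain ⟨s, hs0, hs⟩ := exists_sing hA hpair x
  obtain ⟨t, ht0, ht⟩ := exists_upair hA hpair x y
  obtain ⟨s', hs'0, hs'⟩ := exists_sing hA hpair x'
  obtain ⟨t', ht'0, ht'⟩ := exists_upair hA hpair x' y'
  have hsp : E s p := (h.2 s).2 ⟨hs0, Or.inl fun v => hs v⟩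
  have htp : E t p := (h.2 t).2 ⟨ht0, Or.inr fun v => ht v⟩
  have hs'p : E s' p := (h'.2 s').2 ⟨hs'0, Or.inl fun v => hs' v⟩
  have ht'p : E t' p := (h'.2 t').2 ⟨ht'0, Or.inr fun v => ht' v⟩
  -- x = x'
  have hxx' : x = x' := by
    rcases ((h'.2 s).1 hsp).2 with hw | hw
    · have := (hw x).1 ((hs x).2 rfl); exact this
    · rcases (hw x).1 ((hs x).2 rfl) with hx | hx
      · exact hx
      · -- x = y'; then x' ∈ s gives x' = x
        exact ((hs x').1 ((hw x').2 (Or.inl rfl))).symm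
  subst hxx'
  -- y = y'
  constructor
  · rfl
  · rcases ((h'.2 t).1 htp).2 with hw | hw
    · -- t has extension {x}; so y = x
      have hyx : y = x := (hw y).1 ((ht y).2 (Or.inr rfl))
      -- and t' ∈ p has extension {x} or {x,y}; y' ∈ t'
      rcases ((h.2 t').1 ht'p).2 with hw' | hw'
      · have : y' = x := (hw' y').1 ((ht' y').2 (Or.inr rfl))
        rw [hyx, this]
      · rcases (hw' y').1 ((ht' y').2 (Or.inr rfl)) with h1 | h1
        · rw [hyx, h1]
        · exact h1.symm
    · rcases (hw y).1 ((ht y).2 (Or.inr rfl)) with h1 | h1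
      · -- y = x
        rcases ((h.2 t').1 ht'p).2 with hw' | hw'
        · have : y' = x := (hw' y').1 ((ht' y').2 (Or.inr rfl))
          rw [h1, this]
        · rcases (hw' y').1 ((ht' y').2 (Or.inr rfl)) with h2 | h2
          · rw [h1, h2]
          · exact h2.symm
      · exact h1

theorem fval_unique_of_kpair (hA : AxiomA E A) (hext : Extensionality E A)
    (hpair : Pairing E A) {f x y p : M} (hp : E p f) (hkp : IsKPair E A x y p) :
    FVal E A f x y := ⟨p, hp, hkp⟩

theorem exists_foundation_min (hfnd : Foundation E A) {x z : M} (hz : E z x) :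
    ∃ m, E m x ∧ ∀ w, E w m → ¬ E w x :=
  hfnd x ⟨z, hz⟩

theorem notmem_self (hA : AxiomA E A) (hfnd : Foundation E A) (hpair : Pairing E A)
    (x : M) : ¬ E x x := by
  intro hxx
  obtain ⟨s, hs0, hs⟩ := exists_sing hA hpair x
  obtain ⟨m, hm, hmin⟩ := exists_foundation_min hfnd ((hs x).2 rfl)
  have hmx : m = x := (hs m).1 hm
  exact hmin x (hmx.symm ▸ hxx) ((hs x).2 rfl)

theorem no2cycle (hA : AxiomA E A) (hfnd : Foundation E A) (hpair : Pairing E A)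
    {x y : M} (hxy : E x y) (hyx : E y x) : False := by
  obtain ⟨s, hs0, hs⟩ := exists_upair hA hpair x y
  obtain ⟨m, hm, hmin⟩ := exists_foundation_min hfnd ((hs x).2 (Or.inl rfl))
  rcases (hs m).1 hm with rfl | rfl
  · exact hmin y hyx ((hs y).2 (Or.inr rfl))
  · exact hmin x hxy ((hs x).2 (Or.inl rfl))

theorem ext_iff (hext : Extensionality E A) {x y : M} (hx : ¬ A x) (hy : ¬ A y)
    (h : ∀ z, E z x ↔ E z y) : x = y := hext x y hx hy h

end BasicSets


/-! ### Part 2: external definitions and their expressibility -/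

section Defs

variable {M : Type} (E : M → M → Prop) (A : M → Prop)

/-- `p` is single-valued (as a set of Kuratowski pairs). -/
def SV (p : M) : Prop :=
  ∀ x, ∀ y, ∀ y', FVal E A p x y → FVal E A p x y' → y = y'

/-- `t` is an inductive set. -/
def Ind (t : M) : Prop :=
  (∃ y, E y t ∧ (¬ A y ∧ ∀ z, ¬ E z y)) ∧
  (∀ x, E x t → ∀ u, SuccOf E x u → E u t)

/-- `p` is an iteration attempt: a function on `sn = n+1` with `p 0 = s₀` and
`p (k+1) = ⋃ (p k)`. -/
def Attempt (s₀ sn p : M) : Prop :=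
  ¬ A p ∧
  (∀ q, E q p → ∃ k, ∃ y, E k sn ∧ IsKPair E A k y q) ∧
  (∀ k, E k sn → ∃ y, FVal E A p k y) ∧
  SV E A p ∧
  (∀ k, ∀ y, FVal E A p k y → ¬ A y) ∧
  (∀ z, ∀ y, (∀ w, ¬ E w z) → FVal E A p z y → y = s₀) ∧
  (∀ k, ∀ k', ∀ y, ∀ y', E k sn → SuccOf E k' k → FVal E A p k' y' → FVal E A p k y →
     ∀ w, E w y ↔ ∃ z, E z y' ∧ E w z)

/-- `y` is the `n`-th iterated union of `s₀`. -/
def IterVal (om s₀ n y : M) : Prop :=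
  ∃ sn, E sn om ∧ (SuccOf E n sn ∧ ∃ p, Attempt E A s₀ sn p ∧ FVal E A p n y)

/-- `p` is a recursion approximation for the extension of the urelement
permutation `s` (with field `u`) on the transitive set `T`. -/
def Approx (u s p T : M) : Prop :=
  TransSet E A T ∧
  ¬ A p ∧
  (∀ q, E q p → ∃ x, ∃ y, E x T ∧ IsKPair E A x y q) ∧
  (∀ w, E w T → ∃ y, FVal E A p w y) ∧
  SV E A p ∧
  (∀ w, ∀ y, E w T → A w → FVal E A p w y → (FVal E A s w y ∨ (¬ E w u ∧ y = w))) ∧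
  (∀ w, ∀ y, E w T → ¬ A w → FVal E A p w y →
     (¬ A y ∧ ∀ v, E v y ↔ ∃ w', E w' w ∧ FVal E A p w' v))

/-- `q` is the canonical approximation at `z`. -/
def CanAp (u s z q : M) : Prop :=
  ∃ T, Approx E A u s q T ∧ IsTransClosOfSing E A z T

/-- Disagreement of attempts at `k` (for the foundation argument). -/
def AgreeBad (om s₀ k : M) : Prop :=
  ∃ sn, ∃ p, ∃ sn', ∃ p', ∃ y, ∃ y',
    E sn om ∧ E sn' om ∧ Attempt E A s₀ sn p ∧ Attempt E A s₀ sn' p' ∧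
    E k sn ∧ E k sn' ∧ FVal E A p k y ∧ FVal E A p' k y' ∧ ¬ y = y'

/-- Disagreement of approximations at `z`. -/
def ApBad (u s z : M) : Prop :=
  ∃ p, ∃ T, ∃ p', ∃ T', ∃ y, ∃ y',
    Approx E A u s p T ∧ Approx E A u s p' T' ∧ E z T ∧ E z T' ∧
    FVal E A p z y ∧ FVal E A p' z y' ∧ ¬ y = y'

end Defs

section ExprLib

variable {M : Type} {E : M → M → Prop} {A : M → Prop}

theorem expr_kpair : Expr E A (fun v : Fin 3 → M => IsKPair E A (v 0) (v 1) (v 2)) :=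
  Expr.and (Expr.not (.ur 2)) (Expr.all (Expr.iff (.mem 3 2)
    (Expr.and (Expr.not (.ur 3)) (Expr.or
      (Expr.all (Expr.iff (.mem 4 3) (.eq 4 0)))
      (Expr.all (Expr.iff (.mem 4 3) (Expr.or (.eq 4 0) (.eq 4 1))))))))

theorem expr_fval : Expr E A (fun v : Fin 3 → M => FVal E A (v 0) (v 1) (v 2)) :=
  Expr.ex (Expr.and (.mem 3 0) (expr_kpair.comp ![1, 2, 3]))

theorem expr_succof : Expr E A (fun v : Fin 2 → M => SuccOf E (v 0) (v 1)) :=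
  Expr.all (Expr.iff (.mem 2 1) (Expr.or (.mem 2 0) (.eq 2 0)))

theorem expr_sv : Expr E A (fun v : Fin 1 → M => SV E A (v 0)) :=
  Expr.all (Expr.all (Expr.all (Expr.imp (expr_fval.comp ![0,1,2])
    (Expr.imp (expr_fval.comp ![0,1,3]) (.eq 2 3)))))

theorem expr_transset : Expr E A (fun v : Fin 1 → M => TransSet E A (v 0)) :=
  Expr.and (Expr.not (.ur 0)) (Expr.all (Expr.imp (.mem 1 0)
    (Expr.all (Expr.imp (.mem 2 1) (.mem 2 0)))))

theorem expr_ind : Expr E A (fun v : Fin 1 → M => Ind E A (v 0)) :=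
  Expr.and
    (Expr.ex (Expr.and (.mem 1 0) (Expr.and (Expr.not (.ur 1))
      (Expr.all (Expr.not (.mem 2 1))))))
    (Expr.all (Expr.imp (.mem 1 0) (Expr.all (Expr.imp (expr_succof.comp ![1,2]) (.mem 2 0)))))

theorem expr_attempt : Expr E A (fun v : Fin 3 → M => Attempt E A (v 0) (v 1) (v 2)) :=
  Expr.and (Expr.not (.ur 2)) (Expr.and
    (Expr.all (Expr.imp (.mem 3 2) (Expr.ex (Expr.ex
      (Expr.and (.mem 4 1) (expr_kpair.comp ![4,5,3])))))) (Expr.and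
    (Expr.all (Expr.imp (.mem 3 1) (Expr.ex (expr_fval.comp ![2,3,4])))) (Expr.and
    (expr_sv.comp ![2]) (Expr.and
    (Expr.all (Expr.all (Expr.imp (expr_fval.comp ![2,3,4]) (Expr.not (.ur 4))))) (Expr.and
    (Expr.all (Expr.all (Expr.imp (Expr.all (Expr.not (.mem 5 3)))
      (Expr.imp (expr_fval.comp ![2,3,4]) (.eq 4 0)))))
    (Expr.all (Expr.all (Expr.all (Expr.all (Expr.imp (.mem 3 1)
      (Expr.imp (expr_succof.comp ![4,3]) (Expr.imp (expr_fval.comp ![2,4,6])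
        (Expr.imp (expr_fval.comp ![2,3,5]) (Expr.all (Expr.iff (.mem 7 5)
          (Expr.ex (Expr.and (.mem 8 6) (.mem 7 8))))))))))))))))))

theorem expr_iterval : Expr E A (fun v : Fin 4 → M => IterVal E A (v 0) (v 1) (v 2) (v 3)) :=
  Expr.ex (Expr.and (.mem 4 0) (Expr.and (expr_succof.comp ![2,4])
    (Expr.ex (Expr.and (expr_attempt.comp ![1,4,5]) (expr_fval.comp ![5,2,3])))))

theorem expr_approx : Expr E A (fun v : Fin 4 → M => Approx E A (v 0) (v 1) (v 2) (v 3)) :=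
  Expr.and (expr_transset.comp ![3]) (Expr.and
    (Expr.not (.ur 2)) (Expr.and
    (Expr.all (Expr.imp (.mem 4 2) (Expr.ex (Expr.ex
      (Expr.and (.mem 5 3) (expr_kpair.comp ![5,6,4])))))) (Expr.and
    (Expr.all (Expr.imp (.mem 4 3) (Expr.ex (expr_fval.comp ![2,4,5])))) (Expr.and
    (expr_sv.comp ![2]) (Expr.and
    (Expr.all (Expr.all (Expr.imp (.mem 4 3) (Expr.imp (.ur 4)
      (Expr.imp (expr_fval.comp ![2,4,5]) (Expr.or (expr_fval.comp ![1,4,5])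
        (Expr.and (Expr.not (.mem 4 0)) (.eq 5 4))))))))
    (Expr.all (Expr.all (Expr.imp (.mem 4 3) (Expr.imp (Expr.not (.ur 4))
      (Expr.imp (expr_fval.comp ![2,4,5]) (Expr.and (Expr.not (.ur 5))
        (Expr.all (Expr.iff (.mem 6 5) (Expr.ex
          (Expr.and (.mem 7 4) (expr_fval.comp ![2,7,6]))))))))))))))))

theorem expr_tcs : Expr E A (fun v : Fin 2 → M => IsTransClosOfSing E A (v 0) (v 1)) :=
  Expr.and (expr_transset.comp ![1]) (Expr.and (.mem 0 1)
    (Expr.all (Expr.imp (expr_transset.comp ![2]) (Expr.imp (.mem 0 2)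
      (Expr.all (Expr.imp (.mem 3 1) (.mem 3 2)))))))

theorem expr_canap : Expr E A (fun v : Fin 4 → M => CanAp E A (v 0) (v 1) (v 2) (v 3)) :=
  Expr.ex (Expr.and (expr_approx.comp ![0,1,3,4]) (expr_tcs.comp ![2,4]))

theorem expr_agreebad : Expr E A (fun v : Fin 3 → M => AgreeBad E A (v 0) (v 1) (v 2)) :=
  Expr.ex (Expr.ex (Expr.ex (Expr.ex (Expr.ex (Expr.ex
    (Expr.and (.mem 3 0) (Expr.and (.mem 5 0) (Expr.and (expr_attempt.comp ![1,3,4])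
      (Expr.and (expr_attempt.comp ![1,5,6]) (Expr.and (.mem 2 3) (Expr.and (.mem 2 5)
        (Expr.and (expr_fval.comp ![4,2,7]) (Expr.and (expr_fval.comp ![6,2,8])
          (Expr.not (.eq 7 8)))))))))))))))

theorem expr_apbad : Expr E A (fun v : Fin 3 → M => ApBad E A (v 0) (v 1) (v 2)) :=
  Expr.ex (Expr.ex (Expr.ex (Expr.ex (Expr.ex (Expr.ex
    (Expr.and (expr_approx.comp ![0,1,3,4]) (Expr.and (expr_approx.comp ![0,1,5,6])
      (Expr.and (.mem 2 4) (Expr.and (.mem 2 6) (Expr.and (expr_fval.comp ![3,2,7])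
        (Expr.and (expr_fval.comp ![5,2,8]) (Expr.not (.eq 7 8)))))))))))))

-- Separation/Replacement instance predicates
theorem expr_omega_def : Expr E A (fun v : Fin 1 → M => ∀ t, Ind E A t → E (v 0) t) :=
  Expr.all (Expr.imp (expr_ind.comp ![1]) (.mem 0 1))

theorem expr_memomega : Expr E A (fun v : Fin 2 → M => ∀ m, E m (v 1) → E m (v 0)) :=
  Expr.all (Expr.imp (.mem 2 1) (.mem 2 0))

theorem expr_zerosucc : Expr E A (fun v : Fin 2 → M =>
    (∀ z, ¬ E z (v 1)) ∨ E (v 0) (v 1)) :=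
  Expr.or (Expr.all (Expr.not (.mem 2 1))) (.mem 0 1)

theorem expr_nonzero : Expr E A (fun v : Fin 1 → M =>
    (∀ z, ¬ E z (v 0)) ∨ ∃ m, E m (v 0) ∧ SuccOf E m (v 0)) :=
  Expr.or (Expr.all (Expr.not (.mem 1 0)))
    (Expr.ex (Expr.and (.mem 1 0) (expr_succof.comp ![1,0])))

theorem expr_attemptex : Expr E A (fun v : Fin 3 → M =>
    ∃ sn, E sn (v 0) ∧ (SuccOf E (v 2) sn ∧ ∃ p, Attempt E A (v 1) sn p)) :=
  Expr.ex (Expr.and (.mem 3 0) (Expr.and (expr_succof.comp ![2,3])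
    (Expr.ex (expr_attempt.comp ![1,3,4]))))

theorem expr_tctrim : Expr E A (fun v : Fin 3 → M =>
    ∃ n, E n (v 0) ∧ IterVal E A (v 0) (v 1) n (v 2)) :=
  Expr.ex (Expr.and (.mem 3 0) (expr_iterval.comp ![0,1,3,2]))

theorem expr_t0carve : Expr E A (fun v : Fin 2 → M =>
    ∀ t, TransSet E A t → E (v 0) t → E (v 1) t) :=
  Expr.all (Expr.imp (expr_transset.comp ![2]) (Expr.imp (.mem 0 2) (.mem 1 2)))

theorem expr_p0carve : Expr E A (fun v : Fin 2 → M =>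
    ∃ w, ∃ y, E w (v 0) ∧ IsKPair E A w y (v 1)) :=
  Expr.ex (Expr.ex (Expr.and (.mem 2 0) (expr_kpair.comp ![2,3,1])))

theorem expr_strim : Expr E A (fun v : Fin 4 → M =>
    ∃ z, E z (v 2) ∧ CanAp E A (v 0) (v 1) z (v 3)) :=
  Expr.ex (Expr.and (.mem 4 2) (expr_canap.comp ![0,1,4,3]))

theorem expr_ucarve : Expr E A (fun v : Fin 2 → M =>
    ∃ q, E q (v 0) ∧ ∃ y, IsKPair E A (v 1) y q) :=
  Expr.ex (Expr.and (.mem 2 0) (Expr.ex (expr_kpair.comp ![1,3,2])))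

theorem expr_exfval : Expr E A (fun v : Fin 3 → M =>
    ∃ z, E z (v 1) ∧ FVal E A (v 0) z (v 2)) :=
  Expr.ex (Expr.and (.mem 3 1) (expr_fval.comp ![0,3,2]))

theorem expr_badtot : Expr E A (fun v : Fin 3 → M =>
    ¬ ∃ p, ∃ T, Approx E A (v 0) (v 1) p T ∧ E (v 2) T) :=
  Expr.not (Expr.ex (Expr.ex (Expr.and (expr_approx.comp ![0,1,3,4]) (.mem 2 4))))

theorem expr_injbad : Expr E A (fun v : Fin 3 → M =>
    ∃ z', ∃ y, E z' (v 1) ∧ (¬ (v 2) = z' ∧ (FVal E A (v 0) (v 2) y ∧ FVal E A (v 0) z' y))) :=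
  Expr.ex (Expr.ex (Expr.and (.mem 3 1) (Expr.and (Expr.not (.eq 2 3))
    (Expr.and (expr_fval.comp ![0,2,4]) (expr_fval.comp ![0,3,4])))))

theorem expr_conv : Expr E A (fun v : Fin 2 → M =>
    ∃ q, E q (v 0) ∧ ∃ x, ∃ y, IsKPair E A x y q ∧ IsKPair E A y x (v 1)) :=
  Expr.ex (Expr.and (.mem 2 0) (Expr.ex (Expr.ex
    (Expr.and (expr_kpair.comp ![3,4,2]) (expr_kpair.comp ![4,3,1])))))

theorem expr_compose : Expr E A (fun v : Fin 4 → M =>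
    ∃ x, ∃ y, ∃ z, E x (v 0) ∧ (FVal E A (v 1) x y ∧ (FVal E A (v 2) x z ∧
      IsKPair E A y z (v 3)))) :=
  Expr.ex (Expr.ex (Expr.ex (Expr.and (.mem 4 0) (Expr.and (expr_fval.comp ![1,4,5])
    (Expr.and (expr_fval.comp ![2,4,6]) (expr_kpair.comp ![5,6,3]))))))

theorem expr_apval : Expr E A (fun v : Fin 4 → M =>
    ∃ p, ∃ T, Approx E A (v 0) (v 1) p T ∧ (E (v 2) T ∧ FVal E A p (v 2) (v 3))) :=
  Expr.ex (Expr.ex (Expr.and (expr_approx.comp ![0,1,4,5])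
    (Expr.and (.mem 2 5) (expr_fval.comp ![4,2,3]))))

end ExprLib


/-! ### Part 3: ω, induction, iterated unions, transitive supersets -/

section Omega

variable {M : Type} {E : M → M → Prop} {A : M → Prop}

/-- `om` is (a version of) ω: the intersection of all inductive sets. -/
def IsOmegaSet (E : M → M → Prop) (A : M → Prop) (om : M) : Prop :=
  ¬ A om ∧ Ind E A om ∧ ∀ n, E n om ↔ ∀ t, Ind E A t → E n t

theorem exists_omegaSet (hA : AxiomA E A) (hext : Extensionality E A)
    (hinf : InfinityAx E A) (hsep : SeparationScheme E A) :
    ∃ om, IsOmegaSet E A om := by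
  obtain ⟨s, ⟨y0, hy0s, hy00, hy0e⟩, hscl⟩ := id hinf
  have hsind : Ind E A s := by
    refine ⟨⟨y0, hy0s, hy00, hy0e⟩, fun x hx u hu => ?_⟩
    obtain ⟨u', hu's, hu'⟩ := hscl x hx
    have hueq : u = u' := by
      refine hext u u' (mem_not_ur hA ((hu x).2 (Or.inr rfl)))
        (mem_not_ur hA ((hu' x).2 (Or.inr rfl))) fun v => ?_
      rw [hu v, hu' v]
    rw [hueq]; exact hu's
  obtain ⟨om, hom0, hom⟩ := sepSet hA hinf hsep (expr_omega_def (E := E) (A := A)) ![] s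
  have hmem : ∀ n, E n om ↔ ∀ t, Ind E A t → E n t := by
    intro n
    constructor
    · intro hn
      exact ((hom n).1 hn).2
    · intro hn
      exact (hom n).2 ⟨hn s hsind, hn⟩
  refine ⟨om, hom0, ⟨⟨y0, ?_, hy00, hy0e⟩, ?_⟩, hmem⟩
  · exact (hmem y0).2 fun t ht => by
      obtain ⟨y1, hy1t, hy10, hy1e⟩ := ht.1
      have : y0 = y1 := hext _ _ hy00 hy10 fun z =>
        ⟨fun hz => absurd hz (hy0e z), fun hz => absurd hz (hy1e z)⟩
      rw [this]; exact hy1t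
  · intro x hx u hu
    exact (hmem u).2 fun t ht => ht.2 x ((hmem x).1 hx t ht) u hu

/-- Internal induction over ω. -/
theorem omega_ind (hA : AxiomA E A) (hinf : InfinityAx E A) (hsep : SeparationScheme E A)
    {om : M} (hom : IsOmegaSet E A om)
    {k} {Q : (Fin (k+1) → M) → Prop} (hQ : Expr E A Q) (pa : Fin k → M)
    (P : M → Prop) (hiff : ∀ n, P n ↔ Q (Fin.snoc pa n))
    (h0 : ∀ z, ¬ A z → (∀ w, ¬ E w z) → P z)
    (hs : ∀ n, E n om → P n → ∀ u, ¬ A u → SuccOf E n u → P u) :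
    ∀ n, E n om → P n := by
  obtain ⟨t, ht0, ht⟩ := sepSet hA hinf hsep hQ pa om
  have htind : Ind E A t := by
    obtain ⟨y0, hy0om, hy00, hy0e⟩ := hom.2.1.1
    refine ⟨⟨y0, (ht y0).2 ⟨hy0om, (hiff y0).1 (h0 y0 hy00 hy0e)⟩, hy00, hy0e⟩, ?_⟩
    intro x hx u hu
    obtain ⟨hxom, hQx⟩ := (ht x).1 hx
    have huom : E u om := hom.2.1.2 x hxom u hu
    exact (ht u).2 ⟨huom, (hiff u).1
      (hs x hxom ((hiff x).2 hQx) u (mem_not_ur hA ((hu x).2 (Or.inr rfl))) hu)⟩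
  intro n hn
  exact (hiff n).2 ((ht n).1 ((hom.2.2 n).1 hn t htind)).2

theorem omega_trans_mem (hA : AxiomA E A) (hinf : InfinityAx E A)
    (hsep : SeparationScheme E A) {om : M} (hom : IsOmegaSet E A om) :
    ∀ n, E n om → ∀ m, E m n → E m om := by
  refine omega_ind hA hinf hsep hom (expr_memomega (E := E) (A := A)) ![om]
    (fun n => ∀ m, E m n → E m om) (fun n => Iff.rfl) (fun z _ hz => fun m hm => absurd hm (hz m))
    ?_
  intro n hnom hP u _ hu m hm
  rcases (hu m).1 hm with h | rfl
  · exact hP m h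
  · exact hnom

theorem nat_trans (hA : AxiomA E A) (hinf : InfinityAx E A)
    (hsep : SeparationScheme E A) {om : M} (hom : IsOmegaSet E A om) :
    ∀ n, E n om → TransSet E A n := by
  refine omega_ind hA hinf hsep hom (expr_transset (E := E) (A := A)) ![]
    (fun n => TransSet E A n) (fun n => Iff.rfl)
    (fun z hz0 hz => ⟨hz0, fun y hy => absurd hy (hz y)⟩) ?_
  intro n _ hP u hu0 hu
  refine ⟨hu0, fun y hy z hz => ?_⟩
  rcases (hu y).1 hy with h | rfl
  · exact (hu z).2 (Or.inl (hP.2 y h z hz))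
  · exact (hu z).2 (Or.inl hz)

theorem zero_mem_nat (hA : AxiomA E A) (hinf : InfinityAx E A) (hext : Extensionality E A)
    (hsep : SeparationScheme E A) {om : M} (hom : IsOmegaSet E A om)
    {e : M} (he0 : ¬ A e) (hee : ∀ z, ¬ E z e) :
    ∀ n, E n om → (∀ z, ¬ E z n) ∨ E e n := by
  refine omega_ind hA hinf hsep hom (expr_zerosucc (E := E) (A := A)) ![e]
    (fun n => (∀ z, ¬ E z n) ∨ E e n) (fun n => Iff.rfl) (fun z _ hz => Or.inl hz) ?_
  intro n hnom hP u _ hu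
  rcases hP with h | h
  · have : e = n := hext _ _ he0 (nat_trans hA hinf hsep hom n hnom).1
      fun z => ⟨fun hz => absurd hz (hee z), fun hz => absurd hz (h z)⟩
    exact Or.inr ((hu e).2 (Or.inr this))
  · exact Or.inr ((hu e).2 (Or.inl h))

theorem nonzero_succ (hA : AxiomA E A) (hinf : InfinityAx E A)
    (hsep : SeparationScheme E A) {om : M} (hom : IsOmegaSet E A om) :
    ∀ n, E n om → (∀ z, ¬ E z n) ∨ ∃ m, E m n ∧ SuccOf E m n := by
  refine omega_ind hA hinf hsep hom (expr_nonzero (E := E) (A := A)) ![]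
    (fun n => (∀ z, ¬ E z n) ∨ ∃ m, E m n ∧ SuccOf E m n) (fun n => Iff.rfl)
    (fun z _ hz => Or.inl hz) ?_
  intro n _ _ u _ hu
  exact Or.inr ⟨n, (hu n).2 (Or.inr rfl), hu⟩

theorem succ_mem_omega {om : M} (hom : IsOmegaSet E A om) {n u : M}
    (hn : E n om) (hu : SuccOf E n u) : E u om :=
  (hom.2.2 u).2 fun t ht => ht.2 n ((hom.2.2 n).1 hn t ht) u hu

/-- Existence of attempts of every length. -/
theorem attempt_exists (hA : AxiomA E A) (hext : Extensionality E A) (hfnd : Foundation E A)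
    (hpair : Pairing E A) (hun : UnionAx E A) (hinf : InfinityAx E A)
    (hsep : SeparationScheme E A) {om : M} (hom : IsOmegaSet E A om)
    {s₀ : M} (hs₀ : ¬ A s₀) :
    ∀ n, E n om → ∃ sn, E sn om ∧ (SuccOf E n sn ∧ ∃ p, Attempt E A s₀ sn p) := by
  refine omega_ind hA hinf hsep hom (expr_attemptex (E := E) (A := A)) ![om, s₀]
    (fun n => ∃ sn, E sn om ∧ (SuccOf E n sn ∧ ∃ p, Attempt E A s₀ sn p)) (fun n => Iff.rfl)
    ?base ?step
  case base =>
    intro z hz0 hze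
    obtain ⟨sn, hsn0, hsn⟩ := exists_succof hA hinf hpair hun z
    obtain ⟨e, he0, hee⟩ := exists_empty hinf
    have hzom : E z om := by
      obtain ⟨y0, hy0om, hy00, hy0e⟩ := hom.2.1.1
      have : z = y0 := hext _ _ hz0 hy00 fun w =>
        ⟨fun hw => absurd hw (hze w), fun hw => absurd hw (hy0e w)⟩
      rw [this]; exact hy0om
    refine ⟨sn, succ_mem_omega hom hzom hsn, hsn, ?_⟩
    obtain ⟨q0, hq0⟩ := kpair_intro hA hext hpair z s₀
    obtain ⟨p, hp0, hp⟩ := exists_sing hA hpair q0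
    have hfv : ∀ x y, FVal E A p x y → x = z ∧ y = s₀ := by
      rintro x y ⟨q, hqp, hq⟩
      have : q = q0 := (hp q).1 hqp
      rw [this] at hq
      exact kpair_inj hA hext hpair hq hq0
    refine ⟨p, hp0, ?_, ?_, ?_, ?_, ?_, ?_⟩
    · intro q hq
      exact ⟨z, s₀, (hsn z).2 (Or.inr rfl), by rwa [(hp q).1 hq]⟩
    · intro k hk
      rcases (hsn k).1 hk with h | rfl
      · exact absurd h (hze k)
      · exact ⟨s₀, q0, (hp q0).2 rfl, hq0⟩
    · intro x y y' hy hy'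
      rw [(hfv x y hy).2, (hfv x y' hy').2]
    · intro k y hy
      rw [(hfv k y hy).2]; exact hs₀
    · intro z' y _ hy
      exact (hfv z' y hy).2
    · intro k k' y y' hk hsucc hy' hy
      have h1 := hfv k y hy
      have h2 := hfv k' y' hy'
      exact absurd (h1.1 ▸ (hsucc z).2 (Or.inr h2.1.symm)) (hze z)
  case step =>
    intro n hnom hP u hu0 hu
    obtain ⟨sn, hsnom, hsn, p, hatt⟩ := hP
    have husn : u = sn := by
      refine hext _ _ hu0 (nat_trans hA hinf hsep hom sn hsnom).1 fun w => ?_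
      rw [hu w, hsn w]
    subst husn
    obtain ⟨sn', hsn'0, hsn'⟩ := exists_succof hA hinf hpair hun u
    refine ⟨sn', succ_mem_omega hom hsnom hsn', hsn', ?_⟩
    -- extend the attempt by one step
    have hnu : E n u := (hsn n).2 (Or.inr rfl)
    obtain ⟨yn, hyn⟩ := hatt.2.2.1 n hnu
    obtain ⟨U, hU0, hU⟩ := exists_union hA hinf hun yn
    obtain ⟨qn, hqn⟩ := kpair_intro hA hext hpair u U
    obtain ⟨sq, hsq0, hsq⟩ := exists_sing hA hpair qn
    obtain ⟨p', hp'0, hp'⟩ := exists_bunion hA hinf hpair hun p sq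
    have hnotmem : ¬ E u u := notmem_self hA hfnd hpair u
    have hdomp : ∀ x y, FVal E A p x y → E x u := by
      rintro x y ⟨q, hqp, hq⟩
      obtain ⟨k, y', hk, hk'⟩ := hatt.2.1 q hqp
      obtain ⟨rfl, -⟩ := kpair_inj hA hext hpair hq hk'
      exact hk
    have hfv' : ∀ x y, FVal E A p' x y ↔ (FVal E A p x y ∨ (x = u ∧ y = U)) := by
      intro x y
      constructor
      · rintro ⟨q, hqp', hq⟩
        rcases (hp' q).1 hqp' with h | h
        · exact Or.inl ⟨q, h, hq⟩
        · have : q = qn := (hsq q).1 h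
          rw [this] at hq
          exact Or.inr (kpair_inj hA hext hpair hq hqn)
      · rintro (⟨q, hqp, hq⟩ | ⟨rfl, rfl⟩)
        · exact ⟨q, (hp' q).2 (Or.inl hqp), hq⟩
        · exact ⟨qn, (hp' qn).2 (Or.inr ((hsq qn).2 rfl)), hqn⟩
    have htrs : TransSet E A u := nat_trans hA hinf hsep hom u hsnom
    refine ⟨p', hp'0, ?_, ?_, ?_, ?_, ?_, ?_⟩
    · -- domain inside sn'
      intro q hq
      rcases (hp' q).1 hq with h | h
      · obtain ⟨k, y, hk, hkp⟩ := hatt.2.1 q h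
        exact ⟨k, y, (hsn' k).2 (Or.inl hk), hkp⟩
      · have : q = qn := (hsq q).1 h
        exact ⟨u, U, (hsn' u).2 (Or.inr rfl), this ▸ hqn⟩
    · -- totality
      intro k hk
      rcases (hsn' k).1 hk with h | rfl
      · obtain ⟨y, hy⟩ := hatt.2.2.1 k h
        exact ⟨y, (hfv' k y).2 (Or.inl hy)⟩
      · exact ⟨U, (hfv' k U).2 (Or.inr ⟨rfl, rfl⟩)⟩
    · -- single-valued
      intro x y y' hy hy'
      rcases (hfv' x y).1 hy with h | ⟨rfl, rfl⟩ <;> rcases (hfv' x y').1 hy' with h' | h'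
      · exact hatt.2.2.2.1 x y y' h h'
      · exact absurd (h'.1 ▸ hdomp x y h) hnotmem
      · exact absurd (hdomp x y' h') hnotmem
      · rw [h'.2]
    · -- values are sets
      intro k y hy
      rcases (hfv' k y).1 hy with h | ⟨rfl, rfl⟩
      · exact hatt.2.2.2.2.1 k y h
      · exact hU0
    · -- value at the empty set
      intro z y hze hy
      rcases (hfv' z y).1 hy with h | ⟨rfl, rfl⟩
      · exact hatt.2.2.2.2.2.1 z y hze h
      · exact absurd hnu (hze n)
    · -- successor clause
      intro k k' y y' hk hsucc hy' hy
      rcases (hsn' k).1 hk with hksn | hku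
      · -- k ∈ u : inherited
        have hk'k : E k' k := (hsucc k').2 (Or.inr rfl)
        have hk'u : E k' u := htrs.2 k hksn k' hk'k
        have hyp : FVal E A p k y := by
          rcases (hfv' k y).1 hy with h | ⟨hq1, hq2⟩
          · exact h
          · exact absurd (hq1 ▸ hksn) hnotmem
        have hy'p : FVal E A p k' y' := by
          rcases (hfv' k' y').1 hy' with h | ⟨hq1, hq2⟩
          · exact h
          · exact absurd (no2cycle hA hfnd hpair hksn (hq1 ▸ hk'k)) id
        exact hatt.2.2.2.2.2.2 k k' y y' hksn hsucc hy'p hyp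
      · -- k = u : the new pair
        subst hku
        have hyU : y = U := by
          rcases (hfv' k y).1 hy with h | ⟨hq1, hq2⟩
          · exact absurd (hdomp k y h) hnotmem
          · exact hq2
        have hk'u : E k' k := (hsucc k').2 (Or.inr rfl)
        have hk'n : k' = n := by
          rcases (hsn k').1 hk'u with h | h
          · rcases (hsucc n).1 hnu with h2 | h2
            · exact absurd (no2cycle hA hfnd hpair h h2) id
            · exact absurd (h2 ▸ h) (notmem_self hA hfnd hpair n)
          · exact h
        subst hk'n
        have hy'p : FVal E A p k' y' := by
          rcases (hfv' k' y').1 hy' with h | ⟨hq1, hq2⟩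
          · exact h
          · exact absurd (hq1 ▸ hnu) hnotmem
        have hyny : y' = yn := hatt.2.2.2.1 k' y' yn hy'p hyn
        intro w
        rw [hyU, hU w, hyny]

/-- Any two attempt values at the same `k` agree. -/
theorem attempt_agree (hA : AxiomA E A) (hext : Extensionality E A) (hfnd : Foundation E A)
    (hpair : Pairing E A) (hinf : InfinityAx E A) (hsep : SeparationScheme E A)
    {om : M} (hom : IsOmegaSet E A om) {s₀ : M} :
    ∀ k sn p sn' p' y y', E sn om → E sn' om → Attempt E A s₀ sn p → Attempt E A s₀ sn' p' →
      E k sn → E k sn' → FVal E A p k y → FVal E A p' k y' → y = y' := by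
  intro k sn p sn' p' y y' hsnom hsn'om hat hat' hks hks' hv hv'
  by_contra hne
  obtain ⟨bad, hbad0, hbad⟩ := sepSet hA hinf hsep (expr_agreebad (E := E) (A := A)) ![om, s₀] om
  have hkom : E k om := omega_trans_mem hA hinf hsep hom sn hsnom k hks
  have hkbad : E k bad :=
    (hbad k).2 ⟨hkom, sn, p, sn', p', y, y', hsnom, hsn'om, hat, hat', hks, hks', hv, hv', hne⟩
  obtain ⟨m, hmbad, hmin⟩ := exists_foundation_min hfnd hkbad
  obtain ⟨hmom, sn₁, p₁, sn₂, p₂, y₁, y₂, h1om, h2om, hat1, hat2, hm1, hm2, hv1, hv2, hne'⟩ :=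
    (hbad m).1 hmbad
  rcases nonzero_succ hA hinf hsep hom m hmom with hme | ⟨j, hjm, hsj⟩
  · exact hne' ((hat1.2.2.2.2.2.1 m y₁ hme hv1).trans (hat2.2.2.2.2.2.1 m y₂ hme hv2).symm)
  · have hj1 : E j sn₁ := (nat_trans hA hinf hsep hom sn₁ h1om).2 m hm1 j hjm
    have hj2 : E j sn₂ := (nat_trans hA hinf hsep hom sn₂ h2om).2 m hm2 j hjm
    obtain ⟨w₁, hw₁⟩ := hat1.2.2.1 j hj1
    obtain ⟨w₂, hw₂⟩ := hat2.2.2.1 j hj2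
    have hjom : E j om := omega_trans_mem hA hinf hsep hom m hmom j hjm
    have hjbad : ¬ E j bad := hmin j hjm
    have hw12 : w₁ = w₂ := by
      by_contra hne2
      exact hjbad ((hbad j).2 ⟨hjom, sn₁, p₁, sn₂, p₂, w₁, w₂,
        h1om, h2om, hat1, hat2, hj1, hj2, hw₁, hw₂, hne2⟩)
    have he1 := hat1.2.2.2.2.2.2 m j y₁ w₁ hm1 hsj hw₁ hv1
    have he2 := hat2.2.2.2.2.2.2 m j y₂ w₂ hm2 hsj hw₂ hv2
    refine hne' (hext _ _ (hat1.2.2.2.2.1 m y₁ hv1) (hat2.2.2.2.2.1 m y₂ hv2) fun w => ?_)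
    rw [he1 w, he2 w, hw12]

theorem iterval_exists (hA : AxiomA E A) (hext : Extensionality E A) (hfnd : Foundation E A)
    (hpair : Pairing E A) (hun : UnionAx E A) (hinf : InfinityAx E A)
    (hsep : SeparationScheme E A) {om : M} (hom : IsOmegaSet E A om)
    {s₀ : M} (hs₀ : ¬ A s₀) {n : M} (hn : E n om) :
    ∃ y, IterVal E A om s₀ n y := by
  obtain ⟨sn, hsnom, hsn, p, hat⟩ :=
    attempt_exists hA hext hfnd hpair hun hinf hsep hom hs₀ n hn
  obtain ⟨y, hy⟩ := hat.2.2.1 n ((hsn n).2 (Or.inr rfl))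
  exact ⟨y, sn, hsnom, hsn, p, hat, hy⟩

theorem iterval_unique (hA : AxiomA E A) (hext : Extensionality E A) (hfnd : Foundation E A)
    (hpair : Pairing E A) (hinf : InfinityAx E A) (hsep : SeparationScheme E A)
    {om : M} (hom : IsOmegaSet E A om) {s₀ n y y' : M}
    (h : IterVal E A om s₀ n y) (h' : IterVal E A om s₀ n y') : y = y' := by
  obtain ⟨sn, hsnom, hsn, p, hat, hv⟩ := h
  obtain ⟨sn', hsn'om, hsn', p', hat', hv'⟩ := h'
  exact attempt_agree hA hext hfnd hpair hinf hsep hom n sn p sn' p' y y' hsnom hsn'om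
    hat hat' ((hsn n).2 (Or.inr rfl)) ((hsn' n).2 (Or.inr rfl)) hv hv'

/-- Every object is a member of some transitive set. -/
theorem exists_trans_sup (hA : AxiomA E A) (hext : Extensionality E A) (hfnd : Foundation E A)
    (hpair : Pairing E A) (hun : UnionAx E A) (hinf : InfinityAx E A)
    (hsep : SeparationScheme E A) (hrep : ReplacementScheme E A) (x : M) :
    ∃ T, TransSet E A T ∧ E x T := by
  obtain ⟨om, hom⟩ := exists_omegaSet hA hext hinf hsep
  obtain ⟨s₀, hs₀0, hs₀⟩ := exists_sing hA hpair x
  obtain ⟨v, hv⟩ := repP hrep (expr_iterval (E := E) (A := A)) ![om, s₀] om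
    (fun n hn => by
      obtain ⟨y, hy⟩ := iterval_exists hA hext hfnd hpair hun hinf hsep hom hs₀0 hn
      exact ⟨y, hy, fun y' hy' =>
        iterval_unique hA hext hfnd hpair hinf hsep hom hy' hy⟩)
  obtain ⟨w, hw0, hw⟩ := sepSet hA hinf hsep (expr_tctrim (E := E) (A := A)) ![om, s₀] v
  obtain ⟨T, hT0, hT⟩ := exists_union hA hinf hun w
  obtain ⟨e, he0, hee⟩ := exists_empty hinf
  have heom : E e om := by
    obtain ⟨y0, hy0om, hy00, hy0e⟩ := hom.2.1.1
    have : e = y0 := hext _ _ he0 hy00 fun z =>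
      ⟨fun hz => absurd hz (hee z), fun hz => absurd hz (hy0e z)⟩
    rw [this]; exact hy0om
  have hmemw : ∀ n y, E n om → IterVal E A om s₀ n y → E y w := by
    intro n y hn hy
    obtain ⟨y', hy'v, hy'⟩ := hv n hn
    have : IterVal E A om s₀ n y' := hy'
    have heq : y = y' := iterval_unique hA hext hfnd hpair hinf hsep hom hy this
    subst heq
    exact (hw y).2 ⟨hy'v, n, hn, hy⟩
  refine ⟨T, ⟨hT0, ?_⟩, ?_⟩
  · -- transitivity
    intro z hz z' hz'
    obtain ⟨y, hyw, hzy⟩ := (hT z).1 hz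
    obtain ⟨-, n, hnom, hiv⟩ := (hw y).1 hyw
    obtain ⟨m, hm0, hm⟩ := exists_succof hA hinf hpair hun n
    have hmom : E m om := succ_mem_omega hom hnom hm
    obtain ⟨ym, hym⟩ := iterval_exists hA hext hfnd hpair hun hinf hsep hom hs₀0 hmom
    obtain ⟨snm, hsnmom, hsnm, pm, hatm, hvm⟩ := hym
    have hmsnm : E m snm := (hsnm m).2 (Or.inr rfl)
    have hnsnm : E n snm := (nat_trans hA hinf hsep hom snm hsnmom).2 m hmsnm n ((hm n).2 (Or.inr rfl))
    obtain ⟨yn', hyn'⟩ := hatm.2.2.1 n hnsnm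
    have hyn'y : yn' = y := by
      obtain ⟨sn, hsnom, hsn, p, hat, hv'⟩ := hiv
      exact attempt_agree hA hext hfnd hpair hinf hsep hom n snm pm sn p yn' y hsnmom hsnom
        hatm hat hnsnm ((hsn n).2 (Or.inr rfl)) hyn' hv'
    have hext6 := hatm.2.2.2.2.2.2 m n ym yn' hmsnm hm hyn' hvm
    have hz'ym : E z' ym := (hext6 z').2 ⟨z, hyn'y ▸ hzy, hz'⟩
    exact (hT z').2 ⟨ym, hmemw m ym hmom ⟨snm, hsnmom, hsnm, pm, hatm, hvm⟩, hz'ym⟩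
  · -- x ∈ T
    have hiv0 : IterVal E A om s₀ e s₀ := by
      obtain ⟨sn, hsnom, hsn, p, hat⟩ :=
        attempt_exists hA hext hfnd hpair hun hinf hsep hom hs₀0 e heom
      obtain ⟨y, hy⟩ := hat.2.2.1 e ((hsn e).2 (Or.inr rfl))
      have : y = s₀ := hat.2.2.2.2.2.1 e y hee hy
      exact ⟨sn, hsnom, hsn, p, hat, this ▸ hy⟩
    exact (hT x).2 ⟨s₀, hmemw e s₀ heom hiv0, (hs₀ x).2 rfl⟩

end Omega


/-! ### Part 4: extending an urelement permutation to an ∈-automorphism -/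

section Auto

variable {M : Type} {E : M → M → Prop} {A : M → Prop}

/-- values of the permutation set lie in `u`. -/
theorem sdom (hA : AxiomA E A) (hext : Extensionality E A) (hpair : Pairing E A) {u s : M}
    (hsmem : ∀ q, E q s → ∃ x y, (E x u ∧ E y u) ∧ IsKPair E A x y q)
    {x y : M} (h : FVal E A s x y) : E x u ∧ E y u := by
  obtain ⟨q, hq, hkp⟩ := h
  obtain ⟨x', y', hxy, hkp'⟩ := hsmem q hq
  obtain ⟨h1, h2⟩ := kpair_inj hA hext hpair hkp hkp'
  rw [h1, h2]; exact hxy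

/-- Agreement of approximations. -/
theorem ap_agree (hA : AxiomA E A) (hext : Extensionality E A) (hfnd : Foundation E A)
    (hpair : Pairing E A) (hinf : InfinityAx E A) (hsep : SeparationScheme E A)
    {u s : M}
    (hsmem : ∀ q, E q s → ∃ x y, (E x u ∧ E y u) ∧ IsKPair E A x y q)
    (hssv : SV E A s) :
    ∀ z p T p' T' y y', Approx E A u s p T → Approx E A u s p' T' → E z T → E z T' →
      FVal E A p z y → FVal E A p' z y' → y = y' := by
  intro z p T p' T' y y' hap hap' hzT hzT' hv hv'
  by_contra hne
  obtain ⟨bad, hbad0, hbad⟩ := sepSet hA hinf hsep (expr_apbad (E := E) (A := A)) ![u, s] T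
  have hzbad : E z bad := (hbad z).2 ⟨hzT, p, T, p', T', y, y', hap, hap', hzT, hzT', hv, hv', hne⟩
  obtain ⟨m, hmbad, hmin⟩ := exists_foundation_min hfnd hzbad
  obtain ⟨hmT, p₁, T₁, p₂, T₂, y₁, y₂, hap1, hap2, hm1, hm2, hv1, hv2, hne'⟩ := (hbad m).1 hmbad
  by_cases hAm : A m
  · rcases hap1.2.2.2.2.2.1 m y₁ hm1 hAm hv1 with h1 | ⟨h1, e1⟩ <;>
      rcases hap2.2.2.2.2.2.1 m y₂ hm2 hAm hv2 with h2 | ⟨h2, e2⟩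
    · exact hne' (hssv m y₁ y₂ h1 h2)
    · exact h2 (sdom hA hext hpair hsmem h1).1
    · exact h1 (sdom hA hext hpair hsmem h2).1
    · exact hne' (e1.trans e2.symm)
  · obtain ⟨hy1, hext1⟩ := hap1.2.2.2.2.2.2 m y₁ hm1 hAm hv1
    obtain ⟨hy2, hext2⟩ := hap2.2.2.2.2.2.2 m y₂ hm2 hAm hv2
    refine hne' (hext _ _ hy1 hy2 fun v => ?_)
    have hagree : ∀ w', E w' m → ∀ a b, FVal E A p₁ w' a → FVal E A p₂ w' b → a = b := by
      intro w' hw' a b ha hb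
      by_contra hne2
      exact hmin w' hw' ((hbad w').2 ⟨hap.1.2 m hmT w' hw', p₁, T₁, p₂, T₂, a, b, hap1, hap2,
        hap1.1.2 m hm1 w' hw', hap2.1.2 m hm2 w' hw', ha, hb, hne2⟩)
    rw [hext1 v, hext2 v]
    constructor
    · rintro ⟨w', hw', hval⟩
      obtain ⟨b, hb⟩ := hap2.2.2.2.1 w' (hap2.1.2 m hm2 w' hw')
      rw [hagree w' hw' v b hval hb]
      exact ⟨w', hw', hb⟩
    · rintro ⟨w', hw', hval⟩
      obtain ⟨a, ha⟩ := hap1.2.2.2.1 w' (hap1.1.2 m hm1 w' hw')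
      rw [← hagree w' hw' a v ha hval]
      exact ⟨w', hw', ha⟩


/-- Restriction of an approximation to the transitive closure of a point. -/
theorem ap_restrict (hA : AxiomA E A) (hext : Extensionality E A) (hpair : Pairing E A)
    (hinf : InfinityAx E A) (hsep : SeparationScheme E A) {u s p T x : M}
    (hap : Approx E A u s p T) (hx : E x T) :
    ∃ q T₀, Approx E A u s q T₀ ∧ IsTransClosOfSing E A x T₀ := by
  obtain ⟨T₀, hT₀0, hT₀⟩ := sepSet hA hinf hsep (expr_t0carve (E := E) (A := A)) ![x] T
  have hxT₀ : E x T₀ := (hT₀ x).2 ⟨hx, fun t _ hxt => hxt⟩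
  have htrans : TransSet E A T₀ := by
    refine ⟨hT₀0, fun y hy z hz => ?_⟩
    obtain ⟨hyT, hymin⟩ := (hT₀ y).1 hy
    exact (hT₀ z).2 ⟨hap.1.2 y hyT z hz, fun t ht hxt => ht.2 y (hymin t ht hxt) z hz⟩
  have hsub : ∀ w, E w T₀ → E w T := fun w hw => ((hT₀ w).1 hw).1
  obtain ⟨q, hq0, hq⟩ := sepSet hA hinf hsep (expr_p0carve (E := E) (A := A)) ![T₀] p
  have hfvq : ∀ w y, FVal E A q w y ↔ (FVal E A p w y ∧ E w T₀) := by
    intro w y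
    constructor
    · rintro ⟨r, hrq, hkp⟩
      obtain ⟨hrp, w', y', hw', hkp'⟩ := (hq r).1 hrq
      obtain ⟨h1, h2⟩ := kpair_inj hA hext hpair hkp hkp'
      exact ⟨⟨r, hrp, hkp⟩, h1 ▸ hw'⟩
    · rintro ⟨⟨r, hrp, hkp⟩, hw⟩
      exact ⟨r, (hq r).2 ⟨hrp, w, y, hw, hkp⟩, hkp⟩
  have hq0' : ¬ A q := by
    obtain ⟨y, hy⟩ := hap.2.2.2.1 x hx
    obtain ⟨r, hr, hkp⟩ := (hfvq x y).2 ⟨hy, hxT₀⟩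
    exact mem_not_ur hA hr
  refine ⟨q, T₀, ⟨htrans, hq0', ?_, ?_, ?_, ?_, ?_⟩, htrans, hxT₀, fun t ht hxt z hz =>
    ((hT₀ z).1 hz).2 t ht hxt⟩
  · intro r hr
    obtain ⟨hrp, w', y', hw', hkp'⟩ := (hq r).1 hr
    exact ⟨w', y', hw', hkp'⟩
  · intro w hw
    obtain ⟨y, hy⟩ := hap.2.2.2.1 w (hsub w hw)
    exact ⟨y, (hfvq w y).2 ⟨hy, hw⟩⟩
  · intro a b b' hb hb'
    exact hap.2.2.2.2.1 a b b' ((hfvq a b).1 hb).1 ((hfvq a b').1 hb').1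
  · intro w y hw hAw hv
    exact hap.2.2.2.2.2.1 w y (hsub w hw) hAw ((hfvq w y).1 hv).1
  · intro w y hw hAw hv
    obtain ⟨hy0, hy⟩ := hap.2.2.2.2.2.2 w y (hsub w hw) hAw ((hfvq w y).1 hv).1
    refine ⟨hy0, fun v => (hy v).trans ?_⟩
    constructor
    · rintro ⟨w', hw', hval⟩
      exact ⟨w', hw', (hfvq w' v).2 ⟨hval, htrans.2 w hw w' hw'⟩⟩
    · rintro ⟨w', hw', hval⟩
      exact ⟨w', hw', ((hfvq w' v).1 hval).1⟩

theorem tcs_unique (hext : Extensionality E A) {x T T' : M}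
    (h : IsTransClosOfSing E A x T) (h' : IsTransClosOfSing E A x T') : T = T' :=
  hext T T' h.1.1 h'.1.1 fun z =>
    ⟨fun hz => h.2.2 T' h'.1 h'.2.1 z hz, fun hz => h'.2.2 T h.1 h.2.1 z hz⟩

theorem can_exists (hA : AxiomA E A) (hext : Extensionality E A) (hpair : Pairing E A)
    (hinf : InfinityAx E A) (hsep : SeparationScheme E A) {u s p T x : M}
    (hap : Approx E A u s p T) (hx : E x T) :
    ∃ q, CanAp E A u s x q := by
  obtain ⟨q, T₀, h1, h2⟩ := ap_restrict hA hext hpair hinf hsep hap hx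
  exact ⟨q, T₀, h1, h2⟩

theorem can_unique (hA : AxiomA E A) (hext : Extensionality E A) (hfnd : Foundation E A)
    (hpair : Pairing E A) (hinf : InfinityAx E A) (hsep : SeparationScheme E A)
    {u s : M}
    (hsmem : ∀ q, E q s → ∃ x y, (E x u ∧ E y u) ∧ IsKPair E A x y q)
    (hssv : SV E A s) {z q q' : M}
    (h : CanAp E A u s z q) (h' : CanAp E A u s z q') : q = q' := by
  obtain ⟨T, hap, htcs⟩ := h
  obtain ⟨T', hap', htcs'⟩ := h'
  have hTT : T = T' := tcs_unique hext htcs htcs'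
  subst hTT
  refine hext q q' hap.2.1 hap'.2.1 fun r => ?_
  have key : ∀ (a b : M), Approx E A u s a T → Approx E A u s b T → E r a → E r b := by
    intro a b hapa hapb hra
    obtain ⟨w, y, hw, hkp⟩ := hapa.2.2.1 r hra
    obtain ⟨y', hy'⟩ := hapb.2.2.2.1 w hw
    have : y = y' := ap_agree hA hext hfnd hpair hinf hsep hsmem hssv w a T b T y y'
      hapa hapb hw hw ⟨r, hra, hkp⟩ hy'
    subst this
    obtain ⟨r', hr', hkp'⟩ := hy'
    rwa [kpair_ext hext hkp hkp']
  exact ⟨key q q' hap hap', key q' q hap' hap⟩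

theorem ap_at_ur (hA : AxiomA E A) (hext : Extensionality E A) (hpair : Pairing E A)
    {u s x : M} (hu : IsSetOfUrelements E A u)
    (hstot : ∀ x, E x u → ∃ y, FVal E A s x y)
    (hAx : A x) :
    ∃ p T, Approx E A u s p T ∧ E x T := by
  obtain ⟨T, hT0, hT⟩ := exists_sing hA hpair x
  have hxT : E x T := (hT x).2 rfl
  have htrans : TransSet E A T := by
    refine ⟨hT0, fun y hy z hz => ?_⟩
    have : y = x := (hT y).1 hy
    exact absurd hz (this ▸ hA x hAx z)
  by_cases hxu : E x u
  · obtain ⟨y, hy⟩ := hstot x hxu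
    obtain ⟨r, hkp⟩ := kpair_intro hA hext hpair x y
    obtain ⟨p, hp0, hp⟩ := exists_sing hA hpair r
    have hfv : ∀ a b, FVal E A p a b → a = x ∧ b = y := by
      rintro a b ⟨r', hr', hkp'⟩
      have : r' = r := (hp r').1 hr'
      exact kpair_inj hA hext hpair hkp' (this ▸ hkp)
    refine ⟨p, T, ⟨htrans, hp0, ?_, ?_, ?_, ?_, ?_⟩, hxT⟩
    · intro r' hr'
      exact ⟨x, y, hxT, ((hp r').1 hr') ▸ hkp⟩
    · intro w hw
      exact ⟨y, r, (hp r).2 rfl, ((hT w).1 hw) ▸ hkp⟩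
    · intro a b b' hb hb'
      rw [(hfv a b hb).2, (hfv a b' hb').2]
    · intro w b hw hAw hv
      obtain ⟨rfl, rfl⟩ := hfv w b hv
      exact Or.inl hy
    · intro w b hw hAw hv
      exact absurd ((hfv w b hv).1 ▸ hAx) hAw
  · obtain ⟨r, hkp⟩ := kpair_intro hA hext hpair x x
    obtain ⟨p, hp0, hp⟩ := exists_sing hA hpair r
    have hfv : ∀ a b, FVal E A p a b → a = x ∧ b = x := by
      rintro a b ⟨r', hr', hkp'⟩
      have : r' = r := (hp r').1 hr'
      exact kpair_inj hA hext hpair hkp' (this ▸ hkp)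
    refine ⟨p, T, ⟨htrans, hp0, ?_, ?_, ?_, ?_, ?_⟩, hxT⟩
    · intro r' hr'
      exact ⟨x, x, hxT, ((hp r').1 hr') ▸ hkp⟩
    · intro w hw
      exact ⟨x, r, (hp r).2 rfl, ((hT w).1 hw) ▸ hkp⟩
    · intro a b b' hb hb'
      rw [(hfv a b hb).2, (hfv a b' hb').2]
    · intro w b hw hAw hv
      obtain ⟨rfl, rfl⟩ := hfv w b hv
      exact Or.inr ⟨hxu, rfl⟩
    · intro w b hw hAw hv
      exact absurd ((hfv w b hv).1 ▸ hAx) hAw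

/-- Gluing approximations below `m` to an approximation at `m`. -/
theorem ap_glue (hA : AxiomA E A) (hext : Extensionality E A) (hfnd : Foundation E A)
    (hpair : Pairing E A) (hun : UnionAx E A) (hinf : InfinityAx E A)
    (hsep : SeparationScheme E A) (hrep : ReplacementScheme E A)
    {u s m : M}
    (hsmem : ∀ q, E q s → ∃ x y, (E x u ∧ E y u) ∧ IsKPair E A x y q)
    (hssv : SV E A s)
    (hm0 : ¬ A m)
    (hall : ∀ z, E z m → ∃ p T, Approx E A u s p T ∧ E z T) :
    ∃ p T, Approx E A u s p T ∧ E m T := by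
  by_cases hgoal : ∃ p T, Approx E A u s p T ∧ E m T
  · exact hgoal
  exfalso
  -- canonical approximations for all elements of m
  obtain ⟨v, hv⟩ := repP hrep (expr_canap (E := E) (A := A)) ![u, s] m
    (fun z hz => by
      obtain ⟨p, T, hap, hzT⟩ := hall z hz
      obtain ⟨q, hq⟩ := can_exists hA hext hpair hinf hsep hap hzT
      exact ⟨q, hq, fun q' hq' =>
        can_unique hA hext hfnd hpair hinf hsep hsmem hssv hq' hq⟩)
  obtain ⟨S, hS0, hS⟩ := sepSet hA hinf hsep (expr_strim (E := E) (A := A)) ![u, s, m] v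
  obtain ⟨PS, hPS0, hPS⟩ := exists_union hA hinf hun S
  have hallS : ∀ z, E z m → ∃ q, E q S ∧ CanAp E A u s z q := by
    intro z hz
    obtain ⟨q, hqv, hq⟩ := hv z hz
    have hcq : CanAp E A u s z q := hq
    exact ⟨q, (hS q).2 ⟨hqv, z, hz, hcq⟩, hcq⟩
  have hfvPS : ∀ w y, FVal E A PS w y ↔ ∃ q, E q S ∧ FVal E A q w y := by
    intro w y
    constructor
    · rintro ⟨r, hr, hkp⟩
      obtain ⟨q, hq, hrq⟩ := (hPS r).1 hr
      exact ⟨q, hq, r, hrq, hkp⟩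
    · rintro ⟨q, hq, r, hrq, hkp⟩
      exact ⟨r, (hPS r).2 ⟨q, hq, hrq⟩, hkp⟩
  have hapS : ∀ q, E q S → ∃ T, Approx E A u s q T := by
    intro q hq
    obtain ⟨-, z, hz, T, hap, -⟩ := (hS q).1 hq
    exact ⟨T, hap⟩
  have hnotmT : ∀ q T, E q S → Approx E A u s q T → ¬ E m T := by
    intro q T hq hap hmT
    exact hgoal ⟨q, T, hap, hmT⟩
  -- single-valuedness of the union
  have hsvPS : ∀ a b b', FVal E A PS a b → FVal E A PS a b' → b = b' := by
    intro a b b' hb hb'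
    obtain ⟨q, hq, hfv⟩ := (hfvPS a b).1 hb
    obtain ⟨q', hq', hfv'⟩ := (hfvPS a b').1 hb'
    obtain ⟨T, hap⟩ := hapS q hq
    obtain ⟨T', hap'⟩ := hapS q' hq'
    obtain ⟨r, hr, hkp⟩ := hfv
    obtain ⟨w', y', hw', hkp'⟩ := hap.2.2.1 r hr
    obtain ⟨e1, -⟩ := kpair_inj hA hext hpair hkp hkp'
    obtain ⟨r2, hr2, hkp2⟩ := hfv'
    obtain ⟨w2, y2, hw2, hkp2'⟩ := hap'.2.2.1 r2 hr2
    obtain ⟨e2, -⟩ := kpair_inj hA hext hpair hkp2 hkp2'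
    exact ap_agree hA hext hfnd hpair hinf hsep hsmem hssv a q T q' T' b b' hap hap'
      (e1 ▸ hw') (e2 ▸ hw2) ⟨r, hr, hkp⟩ ⟨r2, hr2, hkp2⟩
  -- the union of the domains
  obtain ⟨W1, hW10, hW1⟩ := exists_union hA hinf hun PS
  obtain ⟨W, hW0, hW⟩ := exists_union hA hinf hun W1
  obtain ⟨U', hU'0, hU'pre⟩ := sepSet hA hinf hsep (expr_ucarve (E := E) (A := A)) ![PS] W
  have hU' : ∀ w, E w U' ↔ (E w W ∧ ∃ r, E r PS ∧ ∃ y, IsKPair E A w y r) := hU'pre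
  have hmemW : ∀ a b r, IsKPair E A a b r → E r PS → E a W ∧ E b W := by
    intro a b r hkp hr
    obtain ⟨sg, hsg0, hsg⟩ := exists_sing hA hpair a
    obtain ⟨up, hup0, hup⟩ := exists_upair hA hpair a b
    have h1 : E sg r := (hkp.2 sg).2 ⟨hsg0, Or.inl fun w => hsg w⟩
    have h2 : E up r := (hkp.2 up).2 ⟨hup0, Or.inr fun w => hup w⟩
    constructor
    · exact (hW a).2 ⟨sg, (hW1 sg).2 ⟨r, hr, h1⟩, (hsg a).2 rfl⟩
    · exact (hW b).2 ⟨up, (hW1 up).2 ⟨r, hr, h2⟩, (hup b).2 (Or.inr rfl)⟩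
  have hU'iff : ∀ w, E w U' ↔ ∃ q T, E q S ∧ Approx E A u s q T ∧ E w T := by
    intro w
    constructor
    · intro hw
      obtain ⟨-, r, hr, y, hkp⟩ := (hU' w).1 hw
      obtain ⟨q, hq, hrq⟩ := (hPS r).1 hr
      obtain ⟨T, hap⟩ := hapS q hq
      obtain ⟨w', y', hw', hkp'⟩ := hap.2.2.1 r hrq
      obtain ⟨e1, -⟩ := kpair_inj hA hext hpair hkp hkp'
      exact ⟨q, T, hq, hap, e1 ▸ hw'⟩
    · rintro ⟨q, T, hq, hap, hwT⟩
      obtain ⟨y, r, hrq, hkp⟩ := hap.2.2.2.1 w hwT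
      have hrPS : E r PS := (hPS r).2 ⟨q, hq, hrq⟩
      exact (hU' w).2 ⟨(hmemW w y r hkp hrPS).1, r, hrPS, y, hkp⟩
  have hmU' : ¬ E m U' := by
    intro hm
    obtain ⟨q, T, hq, hap, hmT⟩ := (hU'iff m).1 hm
    exact hnotmT q T hq hap hmT
  have hfvU' : ∀ w y, FVal E A PS w y → E w U' := by
    rintro w y ⟨r, hr, hkp⟩
    exact (hU' w).2 ⟨(hmemW w y r hkp hr).1, r, hr, y, hkp⟩
  -- the new domain U = U' ∪ {m}
  obtain ⟨sm, hsm0, hsm⟩ := exists_sing hA hpair m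
  obtain ⟨U, hU0, hU⟩ := exists_bunion hA hinf hpair hun U' sm
  have hmU : E m U := (hU m).2 (Or.inr ((hsm m).2 rfl))
  have hUtrans : TransSet E A U := by
    refine ⟨hU0, fun y hy z hz => ?_⟩
    rcases (hU y).1 hy with h | h
    · obtain ⟨q, T, hq, hap, hyT⟩ := (hU'iff y).1 h
      exact (hU z).2 (Or.inl ((hU'iff z).2 ⟨q, T, hq, hap, hap.1.2 y hyT z hz⟩))
    · have : y = m := (hsm y).1 h
      subst this
      obtain ⟨q, hq, T, hap, htcs⟩ := hallS z hz
      exact (hU z).2 (Or.inl ((hU'iff z).2 ⟨q, T, hq, hap, htcs.2.1⟩))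
  -- the new value at m
  obtain ⟨val, hval0, hval⟩ := sepSet hA hinf hsep (expr_exfval (E := E) (A := A)) ![PS, m] W
  have hvaliff : ∀ y, E y val ↔ ∃ z, E z m ∧ FVal E A PS z y := by
    intro y
    constructor
    · intro hy
      exact ((hval y).1 hy).2
    · rintro ⟨z, hz, hfv⟩
      obtain ⟨r, hr, hkp⟩ := hfv
      exact (hval y).2 ⟨(hmemW z y r hkp hr).2, z, hz, r, hr, hkp⟩
  obtain ⟨qm, hqm⟩ := kpair_intro hA hext hpair m val
  obtain ⟨sqm, hsqm0, hsqm⟩ := exists_sing hA hpair qm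
  obtain ⟨pm, hpm0, hpm⟩ := exists_bunion hA hinf hpair hun PS sqm
  have hfvpm : ∀ w y, FVal E A pm w y ↔ (FVal E A PS w y ∨ (w = m ∧ y = val)) := by
    intro w y
    constructor
    · rintro ⟨r, hr, hkp⟩
      rcases (hpm r).1 hr with h | h
      · exact Or.inl ⟨r, h, hkp⟩
      · have : r = qm := (hsqm r).1 h
        exact Or.inr (kpair_inj hA hext hpair hkp (this ▸ hqm))
    · rintro (⟨r, hr, hkp⟩ | ⟨e1, e2⟩)
      · exact ⟨r, (hpm r).2 (Or.inl hr), hkp⟩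
      · exact ⟨qm, (hpm qm).2 (Or.inr ((hsqm qm).2 rfl)), e1 ▸ e2 ▸ hqm⟩
  have hPSnotm : ∀ y, FVal E A PS m y → False := fun y hy => hmU' (hfvU' m y hy)
  refine hgoal ⟨pm, U, ⟨hUtrans, mem_not_ur hA ((hpm qm).2 (Or.inr ((hsqm qm).2 rfl))),
    ?_, ?_, ?_, ?_, ?_⟩, hmU⟩
  · -- domain clause
    intro r hr
    rcases (hpm r).1 hr with h | h
    · obtain ⟨q, hq, hrq⟩ := (hPS r).1 h
      obtain ⟨T, hap⟩ := hapS q hq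
      obtain ⟨w', y', hw', hkp'⟩ := hap.2.2.1 r hrq
      exact ⟨w', y', (hU w').2 (Or.inl ((hU'iff w').2 ⟨q, T, hq, hap, hw'⟩)), hkp'⟩
    · have : r = qm := (hsqm r).1 h
      exact ⟨m, val, hmU, this ▸ hqm⟩
  · -- totality
    intro w hw
    rcases (hU w).1 hw with h | h
    · obtain ⟨q, T, hq, hap, hwT⟩ := (hU'iff w).1 h
      obtain ⟨y, hy⟩ := hap.2.2.2.1 w hwT
      exact ⟨y, (hfvpm w y).2 (Or.inl ((hfvPS w y).2 ⟨q, hq, hy⟩))⟩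
    · have : w = m := (hsm w).1 h
      exact ⟨val, (hfvpm w val).2 (Or.inr ⟨this, rfl⟩)⟩
  · -- single-valued
    intro a b b' hb hb'
    rcases (hfvpm a b).1 hb with h | ⟨e1, e2⟩ <;> rcases (hfvpm a b').1 hb' with h' | ⟨e1', e2'⟩
    · exact hsvPS a b b' h h'
    · exact absurd (e1' ▸ h) fun hh => hPSnotm b hh
    · exact absurd (e1 ▸ h') fun hh => hPSnotm b' hh
    · rw [e2, e2']
  · -- urelement clause
    intro w y hw hAw hv
    rcases (hfvpm w y).1 hv with h | ⟨e1, e2⟩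
    · obtain ⟨q, hq, hfv⟩ := (hfvPS w y).1 h
      obtain ⟨T, hap⟩ := hapS q hq
      obtain ⟨r, hr, hkp⟩ := hfv
      obtain ⟨w', y', hw', hkp'⟩ := hap.2.2.1 r hr
      obtain ⟨ea, -⟩ := kpair_inj hA hext hpair hkp hkp'
      exact hap.2.2.2.2.2.1 w y (ea ▸ hw') hAw ⟨r, hr, hkp⟩
    · exact absurd (e1 ▸ hAw) (fun h => hm0 h)
  · -- set clause
    intro w y hw hAw hv
    rcases (hfvpm w y).1 hv with h | ⟨e1, e2⟩
    · -- w ∈ U' case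
      obtain ⟨q, hq, hfv⟩ := (hfvPS w y).1 h
      obtain ⟨T, hap⟩ := hapS q hq
      obtain ⟨r, hr, hkp⟩ := hfv
      obtain ⟨w', y', hw', hkp'⟩ := hap.2.2.1 r hr
      obtain ⟨ea, -⟩ := kpair_inj hA hext hpair hkp hkp'
      have hwT : E w T := ea ▸ hw'
      obtain ⟨hy0, hy⟩ := hap.2.2.2.2.2.2 w y hwT hAw ⟨r, hr, hkp⟩
      refine ⟨hy0, fun z => (hy z).trans ?_⟩
      constructor
      · rintro ⟨w2, hw2, hval2⟩
        exact ⟨w2, hw2, (hfvpm w2 z).2 (Or.inl ((hfvPS w2 z).2 ⟨q, hq, hval2⟩))⟩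
      · rintro ⟨w2, hw2, hval2⟩
        have hw2T : E w2 T := hap.1.2 w hwT w2 hw2
        obtain ⟨z', hz'⟩ := hap.2.2.2.1 w2 hw2T
        have hz'PS : FVal E A PS w2 z' := (hfvPS w2 z').2 ⟨q, hq, hz'⟩
        have : z = z' := by
          rcases (hfvpm w2 z).1 hval2 with hh | ⟨ee1, ee2⟩
          · exact hsvPS w2 z z' hh hz'PS
          · exact absurd (ee1 ▸ hw2T) (fun hc => hnotmT q T hq hap hc)
        exact ⟨w2, hw2, this ▸ hz'⟩
    · -- w = m case
      subst e1
      subst e2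
      refine ⟨hval0, fun z => (hvaliff z).trans ?_⟩
      constructor
      · rintro ⟨z', hz', hfv⟩
        exact ⟨z', hz', (hfvpm z' z).2 (Or.inl hfv)⟩
      · rintro ⟨z', hz', hfv⟩
        rcases (hfvpm z' z).1 hfv with hh | ⟨ee1, ee2⟩
        · exact ⟨z', hz', hh⟩
        · exact absurd (ee1 ▸ hz') (notmem_self hA hfnd hpair w)
  
/-- Totality: every object lies in the domain of some approximation. -/
theorem ap_total (hA : AxiomA E A) (hext : Extensionality E A) (hfnd : Foundation E A)
    (hpair : Pairing E A) (hun : UnionAx E A) (hinf : InfinityAx E A)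
    (hsep : SeparationScheme E A) (hrep : ReplacementScheme E A)
    {u s : M} (hu : IsSetOfUrelements E A u)
    (hsmem : ∀ q, E q s → ∃ x y, (E x u ∧ E y u) ∧ IsKPair E A x y q)
    (hstot : ∀ x, E x u → ∃ y, FVal E A s x y)
    (hssv : SV E A s) (x : M) :
    ∃ p T, Approx E A u s p T ∧ E x T := by
  by_cases hAx : A x
  · exact ap_at_ur hA hext hpair hu hstot hAx
  obtain ⟨Tp, hTp, hxTp⟩ := exists_trans_sup hA hext hfnd hpair hun hinf hsep hrep x
  by_contra hno
  obtain ⟨bad, hbad0, hbad⟩ := sepSet hA hinf hsep (expr_badtot (E := E) (A := A)) ![u, s] Tp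
  have hxbad : E x bad := (hbad x).2 ⟨hxTp, fun ⟨p, T, hap, hxT⟩ => hno ⟨p, T, hap, hxT⟩⟩
  obtain ⟨m, hmbad, hmin⟩ := exists_foundation_min hfnd hxbad
  obtain ⟨hmTp, hmno⟩ := (hbad m).1 hmbad
  by_cases hAm : A m
  · exact hmno (by
      obtain ⟨p, T, hap, hmT⟩ := ap_at_ur hA hext hpair hu hstot hAm
      exact ⟨p, T, hap, hmT⟩)
  refine hmno ?_
  obtain ⟨p, T, hap, hmT⟩ := ap_glue hA hext hfnd hpair hun hinf hsep hrep hsmem hssv hAm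
    (fun z hz => by
      have hzTp : E z Tp := hTp.2 m hmTp z hz
      by_contra hzno
      exact hmin z hz ((hbad z).2 ⟨hzTp, fun ⟨p, T, hap, hzT⟩ => hzno ⟨p, T, hap, hzT⟩⟩))
  exact ⟨p, T, hap, hmT⟩

/-- The converse of an approximation is an approximation (along the image). -/
theorem ap_conv (hA : AxiomA E A) (hext : Extensionality E A) (hfnd : Foundation E A)
    (hpair : Pairing E A) (hun : UnionAx E A) (hpow : PowersetAx E A) (hinf : InfinityAx E A)
    (hsep : SeparationScheme E A)
    {u s p T x : M} (hu : IsSetOfUrelements E A u)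
    (hsmem : ∀ q, E q s → ∃ x y, (E x u ∧ E y u) ∧ IsKPair E A x y q)
    (hssv : SV E A s)
    (hsinv : ∀ x y, FVal E A s x y → FVal E A s y x)
    (hap : Approx E A u s p T) (hx : E x T) :
    ∃ pinv Timg, Approx E A u s pinv Timg ∧
      (∀ a b, FVal E A pinv a b ↔ (E b T ∧ FVal E A p b a)) ∧
      (∀ y, E y Timg ↔ ∃ w, E w T ∧ FVal E A p w y) := by
  obtain ⟨W1, hW10, hW1⟩ := exists_union hA hinf hun p
  obtain ⟨W, hW0, hW⟩ := exists_union hA hinf hun W1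
  have hmemW : ∀ a b r, IsKPair E A a b r → E r p → E a W ∧ E b W := by
    intro a b r hkp hr
    obtain ⟨sg, hsg0, hsg⟩ := exists_sing hA hpair a
    obtain ⟨up, hup0, hup⟩ := exists_upair hA hpair a b
    have h1 : E sg r := (hkp.2 sg).2 ⟨hsg0, Or.inl fun w => hsg w⟩
    have h2 : E up r := (hkp.2 up).2 ⟨hup0, Or.inr fun w => hup w⟩
    constructor
    · exact (hW a).2 ⟨sg, (hW1 sg).2 ⟨r, hr, h1⟩, (hsg a).2 rfl⟩
    · exact (hW b).2 ⟨up, (hW1 up).2 ⟨r, hr, h2⟩, (hup b).2 (Or.inr rfl)⟩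
  obtain ⟨Timg, hTimg0, hTimgpre⟩ :=
    sepSet hA hinf hsep (expr_exfval (E := E) (A := A)) ![p, T] W
  have hTimg : ∀ y, E y Timg ↔ ∃ w, E w T ∧ FVal E A p w y := by
    intro y
    constructor
    · intro hy
      exact ((hTimgpre y).1 hy).2
    · rintro ⟨w, hw, r, hr, hkp⟩
      exact (hTimgpre y).2 ⟨(hmemW w y r hkp hr).2, w, hw, r, hr, hkp⟩
  -- injectivity of p on T
  have hinj : ∀ z z' y, E z T → E z' T → FVal E A p z y → FVal E A p z' y → z = z' := by
    intro z z' y hzT hz'T hv hv'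
    by_contra hne
    obtain ⟨bad, hbad0, hbadpre⟩ :=
      sepSet hA hinf hsep (expr_injbad (E := E) (A := A)) ![p, T] T
    have hbad : ∀ a, E a bad ↔ (E a T ∧ ∃ z' y, E z' T ∧ (¬ a = z' ∧
        (FVal E A p a y ∧ FVal E A p z' y))) := hbadpre
    have hzbad : E z bad := (hbad z).2 ⟨hzT, z', y, hz'T, hne, hv, hv'⟩
    obtain ⟨m, hmbad, hmin⟩ := exists_foundation_min hfnd hzbad
    obtain ⟨hmT, m', y₁, hm'T, hnem, hv1, hv2⟩ := (hbad m).1 hmbad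
    by_cases hAm : A m <;> by_cases hAm' : A m'
    · rcases hap.2.2.2.2.2.1 m y₁ hmT hAm hv1 with h1 | ⟨h1, e1⟩ <;>
        rcases hap.2.2.2.2.2.1 m' y₁ hm'T hAm' hv2 with h2 | ⟨h2, e2⟩
      · exact hnem (hssv y₁ m m' (hsinv m y₁ h1) (hsinv m' y₁ h2))
      · exact h2 (e2 ▸ (sdom hA hext hpair hsmem h1).2)
      · exact h1 (e1 ▸ (sdom hA hext hpair hsmem h2).2)
      · exact hnem (e1.symm.trans e2)
    · obtain ⟨hy0, -⟩ := hap.2.2.2.2.2.2 m' y₁ hm'T hAm' hv2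
      rcases hap.2.2.2.2.2.1 m y₁ hmT hAm hv1 with h1 | ⟨h1, e1⟩
      · exact hy0 (hu.2 y₁ (sdom hA hext hpair hsmem h1).2)
      · exact hy0 (e1 ▸ hAm)
    · obtain ⟨hy0, -⟩ := hap.2.2.2.2.2.2 m y₁ hmT hAm hv1
      rcases hap.2.2.2.2.2.1 m' y₁ hm'T hAm' hv2 with h2 | ⟨h2, e2⟩
      · exact hy0 (hu.2 y₁ (sdom hA hext hpair hsmem h2).2)
      · exact hy0 (e2 ▸ hAm')
    · obtain ⟨hy0, hext1⟩ := hap.2.2.2.2.2.2 m y₁ hmT hAm hv1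
      obtain ⟨-, hext2⟩ := hap.2.2.2.2.2.2 m' y₁ hm'T hAm' hv2
      refine hnem (hext m m' hAm hAm' fun v => ?_)
      constructor
      · intro hvm
        have hvT : E v T := hap.1.2 m hmT v hvm
        obtain ⟨pv, hpv⟩ := hap.2.2.2.1 v hvT
        obtain ⟨w'', hw'', hval''⟩ := (hext2 pv).1 ((hext1 pv).2 ⟨v, hvm, hpv⟩)
        have : v = w'' := by
          by_contra hne2
          exact hmin v hvm ((hbad v).2
            ⟨hvT, w'', pv, hap.1.2 m' hm'T w'' hw'', hne2, hpv, hval''⟩)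
        exact this ▸ hw''
      · intro hvm'
        have hvT : E v T := hap.1.2 m' hm'T v hvm'
        obtain ⟨pv, hpv⟩ := hap.2.2.2.1 v hvT
        obtain ⟨w', hw', hval'⟩ := (hext1 pv).1 ((hext2 pv).2 ⟨v, hvm', hpv⟩)
        have : w' = v := by
          by_contra hne2
          exact hmin w' hw' ((hbad w').2
            ⟨hap.1.2 m hmT w' hw', v, pv, hvT, hne2, hval', hpv⟩)
        exact this ▸ hw'
  -- Timg is transitive
  have hTimgtrans : TransSet E A Timg := by
    refine ⟨hTimg0, fun y hy v hv => ?_⟩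
    obtain ⟨w, hwT, hfv⟩ := (hTimg y).1 hy
    by_cases hAw : A w
    · rcases hap.2.2.2.2.2.1 w y hwT hAw hfv with h1 | ⟨h1, e1⟩
      · exact absurd hv (hA y (hu.2 y (sdom hA hext hpair hsmem h1).2) v)
      · exact absurd hv (hA y (e1 ▸ hAw) v)
    · obtain ⟨-, hyext⟩ := hap.2.2.2.2.2.2 w y hwT hAw hfv
      obtain ⟨w', hw', hval'⟩ := (hyext v).1 hv
      exact (hTimg v).2 ⟨w', hap.1.2 w hwT w' hw', hval'⟩
  -- the converse set
  obtain ⟨TU, hTU0, hTU⟩ := exists_bunion hA hinf hpair hun T Timg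
  obtain ⟨P1, hP10, hP1⟩ := exists_pow hA hpow hinf TU
  obtain ⟨P2, hP20, hP2⟩ := exists_pow hA hpow hinf P1
  obtain ⟨pinv, hpinv0, hpinvpre⟩ :=
    sepSet hA hinf hsep (expr_conv (E := E) (A := A)) ![p] P2
  have hpinv : ∀ r, E r pinv ↔ (E r P2 ∧ ∃ q, E q p ∧ ∃ a, ∃ b, IsKPair E A a b q ∧
      IsKPair E A b a r) := hpinvpre
  have hfvinv : ∀ a b, FVal E A pinv a b ↔ (E b T ∧ FVal E A p b a) := by
    intro a b
    constructor
    · rintro ⟨r, hr, hkp⟩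
      obtain ⟨-, q, hq, a', b', hkpq, hkpr⟩ := (hpinv r).1 hr
      obtain ⟨e1, e2⟩ := kpair_inj hA hext hpair hkp hkpr
      obtain ⟨w, yy, hwT, hkpw⟩ := hap.2.2.1 q hq
      obtain ⟨e3, e4⟩ := kpair_inj hA hext hpair hkpq hkpw
      refine ⟨?_, ?_⟩
      · rw [e2, e3]; exact hwT
      · rw [e2]; exact ⟨q, hq, e1 ▸ hkpq⟩
    · rintro ⟨hbT, q, hq, hkpq⟩
      obtain ⟨r, hkpr⟩ := kpair_intro hA hext hpair a b
      have haTimg : E a TU := (hTU a).2 (Or.inr ((hTimg a).2 ⟨b, hbT, q, hq, hkpq⟩))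
      have hbTU : E b TU := (hTU b).2 (Or.inl hbT)
      have hrP2 : E r P2 := by
        refine (hP2 r).2 ⟨hkpr.1, fun w hw => ?_⟩
        obtain ⟨hw0, hwext⟩ := (hkpr.2 w).1 hw
        refine (hP1 w).2 ⟨hw0, fun v hv => ?_⟩
        rcases hwext with hws | hwp
        · rw [(hws v).1 hv]; exact haTimg
        · rcases (hwp v).1 hv with e | e
          · rw [e]; exact haTimg
          · rw [e]; exact hbTU
      exact ⟨r, (hpinv r).2 ⟨hrP2, q, hq, b, a, hkpq, hkpr⟩, hkpr⟩
  refine ⟨pinv, Timg, ⟨hTimgtrans, ?_, ?_, ?_, ?_, ?_, ?_⟩, hfvinv, hTimg⟩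
  · -- pinv is a set
    obtain ⟨y0, hy0⟩ := hap.2.2.2.1 x hx
    obtain ⟨r, hr, -⟩ := (hfvinv y0 x).2 ⟨hx, hy0⟩
    exact mem_not_ur hA hr
  · -- domain clause
    intro r hr
    obtain ⟨-, q, hq, a', b', hkpq, hkpr⟩ := (hpinv r).1 hr
    obtain ⟨w, yy, hwT, hkpw⟩ := hap.2.2.1 q hq
    obtain ⟨e3, e4⟩ := kpair_inj hA hext hpair hkpq hkpw
    exact ⟨b', a', (hTimg b').2 ⟨a', e3 ▸ hwT, q, hq, hkpq⟩, hkpr⟩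
  · -- totality
    intro y hy
    obtain ⟨w, hwT, hfv⟩ := (hTimg y).1 hy
    exact ⟨w, (hfvinv y w).2 ⟨hwT, hfv⟩⟩
  · -- single-valued
    intro a b b' hb hb'
    obtain ⟨hbT, hfvb⟩ := (hfvinv a b).1 hb
    obtain ⟨hb'T, hfvb'⟩ := (hfvinv a b').1 hb'
    exact hinj b b' a hbT hb'T hfvb hfvb'
  · -- urelement clause
    intro y b hy hAy hv
    obtain ⟨hbT, hfvb⟩ := (hfvinv y b).1 hv
    by_cases hAb : A b
    · rcases hap.2.2.2.2.2.1 b y hbT hAb hfvb with h1 | ⟨h1, e1⟩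
      · exact Or.inl (hsinv b y h1)
      · exact Or.inr ⟨e1 ▸ h1, e1.symm⟩
    · obtain ⟨hy0, -⟩ := hap.2.2.2.2.2.2 b y hbT hAb hfvb
      exact absurd hAy hy0
  · -- set clause
    intro y b hy hAy hv
    obtain ⟨hbT, hfvb⟩ := (hfvinv y b).1 hv
    have hAb : ¬ A b := by
      intro hAb
      rcases hap.2.2.2.2.2.1 b y hbT hAb hfvb with h1 | ⟨h1, e1⟩
      · exact hAy (hu.2 y (sdom hA hext hpair hsmem h1).2)
      · exact hAy (e1 ▸ hAb)
    obtain ⟨-, hyext⟩ := hap.2.2.2.2.2.2 b y hbT hAb hfvb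
    refine ⟨hAb, fun v => ?_⟩
    constructor
    · intro hvb
      have hvT : E v T := hap.1.2 b hbT v hvb
      obtain ⟨pv, hpv⟩ := hap.2.2.2.1 v hvT
      refine ⟨pv, (hyext pv).2 ⟨v, hvb, hpv⟩, (hfvinv pv v).2 ⟨hvT, hpv⟩⟩
    · rintro ⟨y', hy'y, hfv'⟩
      obtain ⟨hvT, hpv'⟩ := (hfvinv y' v).1 hfv'
      obtain ⟨w', hw', hval'⟩ := (hyext y').1 hy'y
      exact (hinj v w' y' hvT (hap.1.2 b hbT w' hw') hpv' hval') ▸ hw'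

/-- Extension of an internal involution of urelements to an ∈-automorphism. -/
theorem exists_auto (hA : AxiomA E A) (hext : Extensionality E A) (hfnd : Foundation E A)
    (hpair : Pairing E A) (hun : UnionAx E A) (hpow : PowersetAx E A) (hinf : InfinityAx E A)
    (hsep : SeparationScheme E A) (hrep : ReplacementScheme E A)
    {u s : M} (hu : IsSetOfUrelements E A u)
    (hsmem : ∀ q, E q s → ∃ x y, (E x u ∧ E y u) ∧ IsKPair E A x y q)
    (hstot : ∀ x, E x u → ∃ y, FVal E A s x y)
    (hssv : SV E A s)
    (hsinv : ∀ x y, FVal E A s x y → FVal E A s y x) :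
    ∃ π : M ≃ M, IsAutomorphism E A π ∧
      (∀ x y, FVal E A s x y → π x = y) ∧
      (∀ x, A x → ¬ E x u → π x = x) ∧
      (∀ x, ¬ A x → (¬ A (π x) ∧ ∀ v, E v (π x) ↔ ∃ w, E w x ∧ π w = v)) := by
  classical
  have htot : ∀ x : M, ∃ y, ∃ p T, Approx E A u s p T ∧ E x T ∧ FVal E A p x y := by
    intro x
    obtain ⟨p, T, hap, hxT⟩ := ap_total hA hext hfnd hpair hun hinf hsep hrep hu hsmem
      hstot hssv x
    obtain ⟨y, hy⟩ := hap.2.2.2.1 x hxT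
    exact ⟨y, p, T, hap, hxT, hy⟩
  set F : M → M := fun x => (htot x).choose with hFdef
  have hFspec : ∀ x, ∃ p T, Approx E A u s p T ∧ E x T ∧ FVal E A p x (F x) :=
    fun x => (htot x).choose_spec
  have hFval : ∀ x y p T, Approx E A u s p T → E x T → FVal E A p x y → F x = y := by
    intro x y p T hap hxT hy
    obtain ⟨p', T', hap', hxT', hy'⟩ := hFspec x
    exact ap_agree hA hext hfnd hpair hinf hsep hsmem hssv x p' T' p T _ y hap' hap hxT' hxT hy' hy
  have hFur_in : ∀ x y, FVal E A s x y → F x = y := by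
    intro x y hy
    obtain ⟨p, T, hap, hxT, hv⟩ := hFspec x
    have hxu : E x u := (sdom hA hext hpair hsmem hy).1
    rcases hap.2.2.2.2.2.1 x (F x) hxT (hu.2 x hxu) hv with h1 | ⟨h1, e1⟩
    · exact hssv x (F x) y h1 hy
    · exact absurd hxu h1
  have hFur_out : ∀ x, A x → ¬ E x u → F x = x := by
    intro x hAx hxu
    obtain ⟨p, T, hap, hxT, hv⟩ := hFspec x
    rcases hap.2.2.2.2.2.1 x (F x) hxT hAx hv with h1 | ⟨h1, e1⟩
    · exact absurd (sdom hA hext hpair hsmem h1).1 hxu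
    · exact e1
  have hFset : ∀ x, ¬ A x → (¬ A (F x) ∧ ∀ v, E v (F x) ↔ ∃ w, E w x ∧ F w = v) := by
    intro x hAx
    obtain ⟨p, T, hap, hxT, hv⟩ := hFspec x
    obtain ⟨hF0, hFe⟩ := hap.2.2.2.2.2.2 x (F x) hxT hAx hv
    refine ⟨hF0, fun v => (hFe v).trans ?_⟩
    constructor
    · rintro ⟨w, hw, hval⟩
      exact ⟨w, hw, hFval w v p T hap (hap.1.2 x hxT w hw) hval⟩
    · rintro ⟨w, hw, hval⟩
      have hwT : E w T := hap.1.2 x hxT w hw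
      obtain ⟨yw, hyw⟩ := hap.2.2.2.1 w hwT
      have : F w = yw := hFval w yw p T hap hwT hyw
      exact ⟨w, hw, (hval ▸ this) ▸ hyw⟩
  have hinvol : ∀ x, F (F x) = x := by
    intro x
    obtain ⟨p, T, hap, hxT, hv⟩ := hFspec x
    obtain ⟨pinv, Timg, hapinv, hfvinv, hTimg⟩ :=
      ap_conv hA hext hfnd hpair hun hpow hinf hsep hu hsmem hssv hsinv hap hxT
    exact hFval (F x) x pinv Timg hapinv ((hTimg (F x)).2 ⟨x, hxT, hv⟩)
      ((hfvinv (F x) x).2 ⟨hxT, hv⟩)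
  have hE1 : ∀ x y, E x y → E (F x) (F y) := by
    intro x y hxy
    have hAy : ¬ A y := mem_not_ur hA hxy
    exact ((hFset y hAy).2 (F x)).2 ⟨x, hxy, rfl⟩
  have hAiff : ∀ x, A (F x) ↔ A x := by
    intro x
    constructor
    · intro h
      by_contra hAx
      exact (hFset x hAx).1 h
    · intro hAx
      by_cases hxu : E x u
      · obtain ⟨y, hy⟩ := hstot x hxu
        rw [hFur_in x y hy]
        exact hu.2 y (sdom hA hext hpair hsmem hy).2
      · rw [hFur_out x hAx hxu]; exact hAx
  refine ⟨Equiv.mk F F hinvol hinvol, ⟨?_, ?_⟩, ?_, ?_, ?_⟩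
  · intro x y
    constructor
    · intro h
      have := hE1 _ _ h
      rwa [hinvol, hinvol] at this
    · exact hE1 x y
  · exact hAiff
  · exact fun x y h => hFur_in x y h
  · exact fun x h1 h2 => hFur_out x h1 h2
  · exact fun x h => hFset x h

end Auto


/-! ### Part 5: helpers for the main theorem -/

section Top

variable {M : Type} {E : M → M → Prop} {A : M → Prop}

theorem kpair_in_pow (hA : AxiomA E A) {X P1 P2 a b r : M}
    (hP1 : ∀ z, E z P1 ↔ (¬ A z ∧ ∀ w, E w z → E w X))
    (hP2 : ∀ z, E z P2 ↔ (¬ A z ∧ ∀ w, E w z → E w P1))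
    (haX : E a X) (hbX : E b X) (hkp : IsKPair E A a b r) : E r P2 := by
  refine (hP2 r).2 ⟨hkp.1, fun w hw => ?_⟩
  obtain ⟨hw0, hwext⟩ := (hkp.2 w).1 hw
  refine (hP1 w).2 ⟨hw0, fun v hv => ?_⟩
  rcases hwext with hws | hwp
  · rw [(hws v).1 hv]; exact haX
  · rcases (hwp v).1 hv with e | e
    · rw [e]; exact haX
    · rw [e]; exact hbX

end Top

/-- In every model of ZFU_R: if duplication holds over a set of
urelements `a`, then homogeneity holds over `a`. -/
theorem duplication_over_implies_homogeneity_over {M : Type} (E : M → M → Prop) (A : M → Prop)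
    (hZFUR : ZFUR E A) (a : M) (ha : IsSetOfUrelements E A a)
    (hdup : DuplicationOver E A a) : HomogeneityOver E A a := by
  obtain ⟨⟨hA, hext, hfnd, hpair, hun, hpow, hinf, hsep⟩, hrep⟩ := hZFUR
  intro b c hb hc hequi hba hca
  obtain ⟨f, hf⟩ := hequi
  -- b ∪ c and its duplicate
  obtain ⟨bc, hbc0, hbc⟩ := exists_bunion hA hinf hpair hun b c
  have hbcu : IsSetOfUrelements E A bc := by
    refine ⟨hbc0, fun z hz => ?_⟩
    rcases (hbc z).1 hz with h | h
    · exact hb.2 z h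
    · exact hc.2 z h
  have hbca : DisjointM E A bc a := by
    intro z hz
    rcases (hbc z).1 hz with h | h
    · exact hba z h
    · exact hca z h
  obtain ⟨c', hc'u, hc'bc, hc'a, G, hG⟩ := hdup bc hbcu hbca
  -- d = G[b], g = G ∣ b
  obtain ⟨d, hd0, hdpre⟩ := sepSet hA hinf hsep (expr_exfval (E := E) (A := A)) ![G, b] c'
  have hd : ∀ y, E y d ↔ (E y c' ∧ ∃ x, E x b ∧ FVal E A G x y) := hdpre
  obtain ⟨g, hg0, hgpre⟩ := sepSet hA hinf hsep (expr_p0carve (E := E) (A := A)) ![b] G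
  have hg : ∀ q, E q g ↔ (E q G ∧ ∃ w, ∃ y, E w b ∧ IsKPair E A w y q) := hgpre
  have hgfv : ∀ x y, FVal E A g x y ↔ (E x b ∧ FVal E A G x y) := by
    intro x y
    constructor
    · rintro ⟨q, hq, hkp⟩
      obtain ⟨hqG, w, y', hw, hkp'⟩ := (hg q).1 hq
      obtain ⟨e1, -⟩ := kpair_inj hA hext hpair hkp hkp'
      exact ⟨e1 ▸ hw, q, hqG, hkp⟩
    · rintro ⟨hxb, q, hq, hkp⟩
      exact ⟨q, (hg q).2 ⟨hq, x, y, hxb, hkp⟩, hkp⟩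
  have hmemb_bc : ∀ z, E z b → E z bc := fun z hz => (hbc z).2 (Or.inl hz)
  have hmemc_bc : ∀ z, E z c → E z bc := fun z hz => (hbc z).2 (Or.inr hz)
  have hGtot : ∀ x, E x b → ∃ y, FVal E A G x y ∧ E y d := by
    intro x hx
    obtain ⟨y, hy⟩ := hG.1.1.2.2.1 x (hmemb_bc x hx)
    exact ⟨y, hy, (hd y).2 ⟨hG.1.2.1 x y hy, x, hx, hy⟩⟩
  have hdb : ∀ z, E z d → ¬ E z b := by
    intro z hz hzb
    exact hc'bc z ((hd z).1 hz).1 (hmemb_bc z hzb)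
  have hdc : ∀ z, E z d → ¬ E z c := by
    intro z hz hzc
    exact hc'bc z ((hd z).1 hz).1 (hmemc_bc z hzc)
  have hda : ∀ z, E z d → ¬ E z a := fun z hz => hc'a z ((hd z).1 hz).1
  -- u₁ = b ∪ d  and the involution s₁ = g ∪ g⁻¹
  obtain ⟨u₁, hu₁0, hu₁⟩ := exists_bunion hA hinf hpair hun b d
  have hu₁u : IsSetOfUrelements E A u₁ := by
    refine ⟨hu₁0, fun z hz => ?_⟩
    rcases (hu₁ z).1 hz with h | h
    · exact hb.2 z h
    · exact hc'u.2 z ((hd z).1 h).1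
  obtain ⟨P11, hP110, hP11⟩ := exists_pow hA hpow hinf u₁
  obtain ⟨P12, hP120, hP12⟩ := exists_pow hA hpow hinf P11
  obtain ⟨cg, hcg0, hcgpre⟩ := sepSet hA hinf hsep (expr_conv (E := E) (A := A)) ![g] P12
  have hcg : ∀ r, E r cg ↔ (E r P12 ∧ ∃ q, E q g ∧ ∃ x, ∃ y, IsKPair E A x y q ∧
      IsKPair E A y x r) := hcgpre
  obtain ⟨s₁, hs₁0, hs₁⟩ := exists_bunion hA hinf hpair hun g cg
  have hmem_u₁ : ∀ x y, FVal E A g x y → E x u₁ ∧ E y u₁ := by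
    intro x y hxy
    obtain ⟨hxb, hGxy⟩ := (hgfv x y).1 hxy
    refine ⟨(hu₁ x).2 (Or.inl hxb), (hu₁ y).2 (Or.inr ((hd y).2 ⟨hG.1.2.1 x y hGxy, x, hxb, hGxy⟩))⟩
  have hs₁fv : ∀ w z, FVal E A s₁ w z ↔
      (FVal E A g w z ∨ ∃ x, ∃ y, FVal E A g x y ∧ w = y ∧ z = x) := by
    intro w z
    constructor
    · rintro ⟨r, hr, hkp⟩
      rcases (hs₁ r).1 hr with h | h
      · exact Or.inl ⟨r, h, hkp⟩
      · obtain ⟨-, q, hq, x, y, hkpq, hkpr⟩ := (hcg r).1 h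
        obtain ⟨e1, e2⟩ := kpair_inj hA hext hpair hkp hkpr
        exact Or.inr ⟨x, y, ⟨q, hq, hkpq⟩, e1, e2⟩
    · rintro (⟨r, hr, hkp⟩ | ⟨x, y, ⟨q, hq, hkpq⟩, e1, e2⟩)
      · exact ⟨r, (hs₁ r).2 (Or.inl hr), hkp⟩
      · obtain ⟨r, hkpr⟩ := kpair_intro hA hext hpair y x
        have hcomps := hmem_u₁ x y ⟨q, hq, hkpq⟩
        have hrP : E r P12 := kpair_in_pow hA hP11 hP12 hcomps.2 hcomps.1 hkpr
        exact ⟨r, (hs₁ r).2 (Or.inr ((hcg r).2 ⟨hrP, q, hq, x, y, hkpq, hkpr⟩)),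
          e1 ▸ e2 ▸ hkpr⟩
  have hs₁mem : ∀ q, E q s₁ → ∃ x y, (E x u₁ ∧ E y u₁) ∧ IsKPair E A x y q := by
    intro q hq
    rcases (hs₁ q).1 hq with h | h
    · obtain ⟨hqG, w, y, hw, hkp⟩ := (hg q).1 h
      exact ⟨w, y, hmem_u₁ w y ⟨q, (hg q).2 ⟨hqG, w, y, hw, hkp⟩, hkp⟩, hkp⟩
    · obtain ⟨-, q', hq', x, y, hkpq, hkpr⟩ := (hcg q).1 h
      have hcomps := hmem_u₁ x y ⟨q', hq', hkpq⟩
      exact ⟨y, x, ⟨hcomps.2, hcomps.1⟩, hkpr⟩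
  have hs₁tot : ∀ x, E x u₁ → ∃ y, FVal E A s₁ x y := by
    intro x hx
    rcases (hu₁ x).1 hx with h | h
    · obtain ⟨y, hy, hyd⟩ := hGtot x h
      exact ⟨y, (hs₁fv x y).2 (Or.inl ((hgfv x y).2 ⟨h, hy⟩))⟩
    · obtain ⟨-, x', hx'b, hGx'⟩ := (hd x).1 h
      exact ⟨x', (hs₁fv x x').2 (Or.inr ⟨x', x, (hgfv x' x).2 ⟨hx'b, hGx'⟩, rfl, rfl⟩)⟩
  have hginj : ∀ x x' y, FVal E A g x y → FVal E A g x' y → x = x' := by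
    intro x x' y h1 h2
    exact hG.1.2.2 x x' y ((hgfv x y).1 h1).2 ((hgfv x' y).1 h2).2
  have hgsv : ∀ x y y', FVal E A g x y → FVal E A g x y' → y = y' := by
    intro x y y' h1 h2
    exact hG.1.1.2.2.2 x y y' ((hgfv x y).1 h1).2 ((hgfv x y').1 h2).2
  have hgdom : ∀ x y, FVal E A g x y → E x b ∧ E y d := by
    intro x y h
    obtain ⟨hxb, hGxy⟩ := (hgfv x y).1 h
    exact ⟨hxb, (hd y).2 ⟨hG.1.2.1 x y hGxy, x, hxb, hGxy⟩⟩
  have hs₁sv : SV E A s₁ := by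
    intro w z z' h1 h2
    rcases (hs₁fv w z).1 h1 with hl | ⟨x, y, hxy, e1, e2⟩ <;>
      rcases (hs₁fv w z').1 h2 with hl' | ⟨x', y', hxy', e1', e2'⟩
    · exact hgsv w z z' hl hl'
    · exact absurd (hgdom w z hl).1 (hdb w (e1' ▸ (hgdom x' y' hxy').2))
    · exact absurd (hgdom w z' hl').1 (hdb w (e1 ▸ (hgdom x y hxy).2))
    · rw [e2, e2']
      exact hginj x x' w (e1 ▸ hxy) (e1' ▸ hxy') ▸ rfl
  have hs₁inv : ∀ x y, FVal E A s₁ x y → FVal E A s₁ y x := by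
    intro x y h
    rcases (hs₁fv x y).1 h with hl | ⟨x', y', hxy', e1, e2⟩
    · exact (hs₁fv y x).2 (Or.inr ⟨x, y, hl, rfl, rfl⟩)
    · exact (hs₁fv y x).2 (Or.inl (e2 ▸ e1 ▸ hxy'))
  obtain ⟨π₁, hπ₁auto, hπ₁val, hπ₁fix, hπ₁set⟩ := exists_auto hA hext hfnd hpair hun hpow
    hinf hsep hrep hu₁u hs₁mem hs₁tot hs₁sv hs₁inv
  -- u₂ = d ∪ c and the involution s₂ = (f ∘ g⁻¹) ∪ (g ∘ f⁻¹)
  obtain ⟨u₂, hu₂0, hu₂⟩ := exists_bunion hA hinf hpair hun d c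
  have hu₂u : IsSetOfUrelements E A u₂ := by
    refine ⟨hu₂0, fun z hz => ?_⟩
    rcases (hu₂ z).1 hz with h | h
    · exact hc'u.2 z ((hd z).1 h).1
    · exact hc.2 z h
  obtain ⟨P21, hP210, hP21⟩ := exists_pow hA hpow hinf u₂
  obtain ⟨P22, hP220, hP22⟩ := exists_pow hA hpow hinf P21
  obtain ⟨cp, hcp0, hcppre⟩ := sepSet hA hinf hsep (expr_compose (E := E) (A := A)) ![b, g, f] P22
  have hcp : ∀ r, E r cp ↔ (E r P22 ∧ ∃ x, ∃ y, ∃ z, E x b ∧ (FVal E A g x y ∧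
      (FVal E A f x z ∧ IsKPair E A y z r))) := hcppre
  have hfdom : ∀ x z, FVal E A f x z → E z c := fun x z h => hf.1.2.1 x z h
  have hmem_u₂ : ∀ x y z, E x b → FVal E A g x y → FVal E A f x z → E y u₂ ∧ E z u₂ := by
    intro x y z hx hg1 hf1
    exact ⟨(hu₂ y).2 (Or.inl (hgdom x y hg1).2), (hu₂ z).2 (Or.inr (hfdom x z hf1))⟩
  have hcpfv : ∀ w z, FVal E A cp w z ↔ ∃ x, E x b ∧ FVal E A g x w ∧ FVal E A f x z := by
    intro w z
    constructor
    · rintro ⟨r, hr, hkp⟩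
      obtain ⟨-, x, y, zz, hx, hg1, hf1, hkpr⟩ := (hcp r).1 hr
      obtain ⟨e1, e2⟩ := kpair_inj hA hext hpair hkp hkpr
      exact ⟨x, hx, e1 ▸ hg1, e2 ▸ hf1⟩
    · rintro ⟨x, hx, hg1, hf1⟩
      obtain ⟨r, hkpr⟩ := kpair_intro hA hext hpair w z
      have hcomps := hmem_u₂ x w z hx hg1 hf1
      have hrP : E r P22 := kpair_in_pow hA hP21 hP22 hcomps.1 hcomps.2 hkpr
      exact ⟨r, (hcp r).2 ⟨hrP, x, w, z, hx, hg1, hf1, hkpr⟩, hkpr⟩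
  obtain ⟨ccp, hccp0, hccppre⟩ := sepSet hA hinf hsep (expr_conv (E := E) (A := A)) ![cp] P22
  have hccp : ∀ r, E r ccp ↔ (E r P22 ∧ ∃ q, E q cp ∧ ∃ x, ∃ y, IsKPair E A x y q ∧
      IsKPair E A y x r) := hccppre
  obtain ⟨s₂, hs₂0, hs₂⟩ := exists_bunion hA hinf hpair hun cp ccp
  have hs₂fv : ∀ w z, FVal E A s₂ w z ↔
      (FVal E A cp w z ∨ ∃ x, ∃ y, FVal E A cp x y ∧ w = y ∧ z = x) := by
    intro w z
    constructor
    · rintro ⟨r, hr, hkp⟩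
      rcases (hs₂ r).1 hr with h | h
      · exact Or.inl ⟨r, h, hkp⟩
      · obtain ⟨-, q, hq, x, y, hkpq, hkpr⟩ := (hccp r).1 h
        obtain ⟨e1, e2⟩ := kpair_inj hA hext hpair hkp hkpr
        exact Or.inr ⟨x, y, ⟨q, hq, hkpq⟩, e1, e2⟩
    · rintro (⟨r, hr, hkp⟩ | ⟨x, y, ⟨q, hq, hkpq⟩, e1, e2⟩)
      · exact ⟨r, (hs₂ r).2 (Or.inl hr), hkp⟩
      · obtain ⟨r, hkpr⟩ := kpair_intro hA hext hpair y x
        obtain ⟨x', hx', hg1, hf1⟩ := (hcpfv x y).1 ⟨q, hq, hkpq⟩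
        have hcomps := hmem_u₂ x' x y hx' hg1 hf1
        have hrP : E r P22 := kpair_in_pow hA hP21 hP22 hcomps.2 hcomps.1 hkpr
        exact ⟨r, (hs₂ r).2 (Or.inr ((hccp r).2 ⟨hrP, q, hq, x, y, hkpq, hkpr⟩)),
          e1 ▸ e2 ▸ hkpr⟩
  have hcpdom : ∀ w z, FVal E A cp w z → E w d ∧ E z c := by
    intro w z h
    obtain ⟨x, hx, hg1, hf1⟩ := (hcpfv w z).1 h
    exact ⟨(hgdom x w hg1).2, hfdom x z hf1⟩
  have hs₂mem : ∀ q, E q s₂ → ∃ x y, (E x u₂ ∧ E y u₂) ∧ IsKPair E A x y q := by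
    intro q hq
    rcases (hs₂ q).1 hq with h | h
    · obtain ⟨-, x, y, zz, hx, hg1, hf1, hkpr⟩ := (hcp q).1 h
      have hcomps := hmem_u₂ x y zz hx hg1 hf1
      exact ⟨y, zz, hcomps, hkpr⟩
    · obtain ⟨-, q', hq', x, y, hkpq, hkpr⟩ := (hccp q).1 h
      obtain ⟨x', hx', hg1, hf1⟩ := (hcpfv x y).1 ⟨q', hq', hkpq⟩
      have hcomps := hmem_u₂ x' x y hx' hg1 hf1
      exact ⟨y, x, ⟨hcomps.2, hcomps.1⟩, hkpr⟩
  have hs₂tot : ∀ w, E w u₂ → ∃ z, FVal E A s₂ w z := by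
    intro w hw
    rcases (hu₂ w).1 hw with h | h
    · obtain ⟨-, x, hx, hGx⟩ := (hd w).1 h
      obtain ⟨z, hz⟩ := hf.1.1.2.2.1 x hx
      exact ⟨z, (hs₂fv w z).2 (Or.inl ((hcpfv w z).2 ⟨x, hx, (hgfv x w).2 ⟨hx, hGx⟩, hz⟩))⟩
    · obtain ⟨x, hx, hfx⟩ := hf.2 w h
      obtain ⟨y, hy, hyd⟩ := hGtot x hx
      exact ⟨y, (hs₂fv w y).2 (Or.inr ⟨y, w,
        (hcpfv y w).2 ⟨x, hx, (hgfv x y).2 ⟨hx, hy⟩, hfx⟩, rfl, rfl⟩)⟩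
  have hcpsv : ∀ w z z', FVal E A cp w z → FVal E A cp w z' → z = z' := by
    intro w z z' h1 h2
    obtain ⟨x, hx, hg1, hf1⟩ := (hcpfv w z).1 h1
    obtain ⟨x', hx', hg1', hf1'⟩ := (hcpfv w z').1 h2
    have : x = x' := hginj x x' w hg1 hg1'
    subst this
    exact hf.1.1.2.2.2 x z z' hf1 hf1'
  have hcpinj : ∀ w w' z, FVal E A cp w z → FVal E A cp w' z → w = w' := by
    intro w w' z h1 h2
    obtain ⟨x, hx, hg1, hf1⟩ := (hcpfv w z).1 h1
    obtain ⟨x', hx', hg1', hf1'⟩ := (hcpfv w' z).1 h2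
    have : x = x' := hf.1.2.2 x x' z hf1 hf1'
    subst this
    exact hgsv x w w' hg1 hg1'
  have hs₂sv : SV E A s₂ := by
    intro w z z' h1 h2
    rcases (hs₂fv w z).1 h1 with hl | ⟨x, y, hxy, e1, e2⟩ <;>
      rcases (hs₂fv w z').1 h2 with hl' | ⟨x', y', hxy', e1', e2'⟩
    · exact hcpsv w z z' hl hl'
    · exact absurd (hcpdom w z hl).1 (fun hh => hdc w hh (e1' ▸ (hcpdom x' y' hxy').2))
    · exact absurd (hcpdom w z' hl').1 (fun hh => hdc w hh (e1 ▸ (hcpdom x y hxy).2))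
    · rw [e2, e2']
      exact hcpinj x x' w (e1 ▸ hxy) (e1' ▸ hxy') ▸ rfl
  have hs₂inv : ∀ x y, FVal E A s₂ x y → FVal E A s₂ y x := by
    intro x y h
    rcases (hs₂fv x y).1 h with hl | ⟨x', y', hxy', e1, e2⟩
    · exact (hs₂fv y x).2 (Or.inr ⟨x, y, hl, rfl, rfl⟩)
    · exact (hs₂fv y x).2 (Or.inl (e2 ▸ e1 ▸ hxy'))
  obtain ⟨π₂, hπ₂auto, hπ₂val, hπ₂fix, hπ₂set⟩ := exists_auto hA hext hfnd hpair hun hpow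
    hinf hsep hrep hu₂u hs₂mem hs₂tot hs₂sv hs₂inv
  -- the composite automorphism
  refine ⟨π₁.trans π₂, ⟨fun x y => ?_, fun x => ?_⟩, ?_, ?_⟩
  · simp only [Equiv.trans_apply]
    rw [hπ₂auto.1, hπ₁auto.1]
  · simp only [Equiv.trans_apply]
    rw [hπ₂auto.2, hπ₁auto.2]
  · -- π b = c
    simp only [Equiv.trans_apply]
    have hπ₁b : π₁ b = d := by
      obtain ⟨h1, h2⟩ := hπ₁set b hb.1
      refine hext _ _ h1 hd0 fun v => (h2 v).trans ?_
      constructor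
      · rintro ⟨w, hw, hval⟩
        obtain ⟨y, hy, hyd⟩ := hGtot w hw
        rw [← hval, hπ₁val w y ((hs₁fv w y).2 (Or.inl ((hgfv w y).2 ⟨hw, hy⟩)))]
        exact hyd
      · intro hv
        obtain ⟨-, x, hx, hGx⟩ := (hd v).1 hv
        exact ⟨x, hx, hπ₁val x v ((hs₁fv x v).2 (Or.inl ((hgfv x v).2 ⟨hx, hGx⟩)))⟩
    rw [hπ₁b]
    obtain ⟨h1, h2⟩ := hπ₂set d hd0
    refine hext _ _ h1 hc.1 fun v => (h2 v).trans ?_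
    constructor
    · rintro ⟨w, hw, hval⟩
      obtain ⟨-, x, hx, hGx⟩ := (hd w).1 hw
      obtain ⟨z, hz⟩ := hf.1.1.2.2.1 x hx
      rw [← hval, hπ₂val w z ((hs₂fv w z).2 (Or.inl ((hcpfv w z).2
        ⟨x, hx, (hgfv x w).2 ⟨hx, hGx⟩, hz⟩)))]
      exact hfdom x z hz
    · intro hv
      obtain ⟨x, hx, hfx⟩ := hf.2 v hv
      obtain ⟨y, hy, hyd⟩ := hGtot x hx
      exact ⟨y, hyd, hπ₂val y v ((hs₂fv y v).2 (Or.inl ((hcpfv y v).2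
        ⟨x, hx, (hgfv x y).2 ⟨hx, hy⟩, hfx⟩)))⟩
  · -- fixes a pointwise
    intro x hxa
    have hAx : A x := ha.2 x hxa
    have hx1 : ¬ E x u₁ := by
      intro h
      rcases (hu₁ x).1 h with hh | hh
      · exact hba x hh hxa
      · exact hda x hh hxa
    have hx2 : ¬ E x u₂ := by
      intro h
      rcases (hu₂ x).1 h with hh | hh
      · exact hda x hh hxa
      · exact hca x hh hxa
    simp only [Equiv.trans_apply]
    rw [hπ₁fix x hAx hx1, hπ₂fix x hAx hx2]

end Urelements
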